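/- arXiv:1511.08677 — 6 statements merged into one kernel-verified Lean document; each statement's English description precedes it below -/
import Mathlib

section
/- Let E be a Polish space and ψ: E → [0,∞) a continuous function. If (μ_n) is a sequence of Borel probability measures on E with ∫ψ dμ_n < ∞ for all n, μ_n → μ_0 weakly, and ∫ψ dμ_n → ∫ψ dμ_0 < ∞, then for every continuous function f: E → ℝ with sup_x |f(x)|/(1+ψ(x)) < ∞ it holds that ∫f dμ_n → ∫f dμ_0. -/
open MeasureTheory Filter Topology

theorem stmt0 {E : Type*} [MeasurableSpace E] [TopologicalSpace E] [PolishSpace E]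
    [BorelSpace E]
    (ψ : E → ℝ) (hψc : Continuous ψ) (hψ0 : ∀ x, 0 ≤ ψ x)
    (μ : ℕ → ProbabilityMeasure E) (μ₀ : ProbabilityMeasure E)
    (hint : ∀ n, Integrable ψ (μ n : Measure E))
    (hint0 : Integrable ψ (μ₀ : Measure E))
    (hweak : Tendsto μ atTop (𝓝 μ₀))
    (hmom : Tendsto (fun n => ∫ x, ψ x ∂(μ n : Measure E)) atTop
      (𝓝 (∫ x, ψ x ∂(μ₀ : Measure E))))
    (f : E → ℝ) (hf : Continuous f) (C : ℝ) (hfb : ∀ x, |f x| ≤ C * (1 + ψ x)) :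
    Tendsto (fun n => ∫ x, f x ∂(μ n : Measure E)) atTop
      (𝓝 (∫ x, f x ∂(μ₀ : Measure E))) := by
  set C' : ℝ := max C 0 with hC'def
  have hC'0 : 0 ≤ C' := le_max_right _ _
  have hfb' : ∀ x, |f x| ≤ C' * (1 + ψ x) := fun x =>
    (hfb x).trans (mul_le_mul_of_nonneg_right (le_max_left _ _)
      (by have := hψ0 x; linarith))
  -- integrability of f
  have hfint : ∀ (ν : Measure E), IsProbabilityMeasure ν → Integrable ψ ν → Integrable f ν := by
    intro ν hν hψν
    refine Integrable.mono' (((integrable_const (1:ℝ)).add hψν).const_mul C')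
      hf.aestronglyMeasurable (ae_of_all _ fun x => ?_)
    simpa [Real.norm_eq_abs, mul_add] using (hfb' x).trans_eq (by ring)
  -- monotone truncation convergence at μ₀
  have key : Tendsto (fun M : ℕ => ∫ x, min (ψ x) M ∂(μ₀ : Measure E)) atTop
      (𝓝 (∫ x, ψ x ∂(μ₀ : Measure E))) := by
    refine tendsto_integral_of_dominated_convergence ψ
      (fun M => (hψc.min continuous_const).aestronglyMeasurable) hint0
      (fun M => ae_of_all _ fun x => ?_) (ae_of_all _ fun x => ?_)
    · rw [Real.norm_eq_abs, abs_of_nonneg (le_min (hψ0 x) (Nat.cast_nonneg M))]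
      exact min_le_left _ _
    · refine tendsto_atTop_of_eventually_const (i₀ := ⌈ψ x⌉₊) fun M hM => ?_
      exact min_eq_left ((Nat.le_ceil _).trans (Nat.cast_le.mpr hM))
  rw [Metric.tendsto_atTop]
  intro ε hε
  set δ : ℝ := ε / (4 * (C' + 1)) with hδdef
  have hδ : 0 < δ := by positivity
  -- choose M
  obtain ⟨M, hM⟩ := (Metric.tendsto_atTop.mp key δ hδ)
  have hM0 : ∫ x, ψ x ∂(μ₀ : Measure E) - ∫ x, min (ψ x) M ∂(μ₀ : Measure E) < δ := by
    have := hM M le_rfl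
    rw [Real.dist_eq] at this
    have := abs_lt.mp this
    linarith [this.1]
  set B : ℝ := C' * (1 + (M : ℝ)) with hBdef
  have hB0 : 0 ≤ B := by positivity
  -- bounded continuous truncations
  set gb : BoundedContinuousFunction E ℝ := BoundedContinuousFunction.ofNormedAddCommGroup
    (fun x => min (ψ x) M) (hψc.min continuous_const) M (fun x => by
      rw [Real.norm_eq_abs, abs_of_nonneg (le_min (hψ0 x) (Nat.cast_nonneg M))]
      exact min_le_right _ _) with hgbdef
  set fb : BoundedContinuousFunction E ℝ := BoundedContinuousFunction.ofNormedAddCommGroup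
    (fun x => max (min (f x) B) (-B)) ((hf.min continuous_const).max continuous_const) B
    (fun x => by
      rw [Real.norm_eq_abs, abs_le]
      exact ⟨le_max_right _ _, max_le (min_le_right _ _) (neg_le_self hB0)⟩) with hfbdef
  -- pointwise error bound
  have hpt : ∀ x, |f x - fb x| ≤ C' * (ψ x - min (ψ x) M) := by
    intro x
    have hmle : min (ψ x) (M : ℝ) ≤ M := min_le_right _ _
    have hmψ : min (ψ x) (M : ℝ) ≤ ψ x := min_le_left _ _
    have habs := abs_le.mp (hfb' x)
    have hprod : C' * min (ψ x) (M : ℝ) ≤ C' * M := mul_le_mul_of_nonneg_left hmle hC'0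
    have hfbx : fb x = max (min (f x) B) (-B) := rfl
    rcases le_total (f x) B with h1 | h1
    · rcases le_total (-B) (f x) with h2 | h2
      · rw [hfbx, min_eq_left h1, max_eq_left h2, sub_self, abs_zero]
        exact mul_nonneg hC'0 (by linarith)
      · rw [hfbx, min_eq_left h1, max_eq_right h2, abs_le]
        constructor <;> nlinarith [habs.1, habs.2]
    · rw [hfbx, min_eq_right h1, max_eq_left (neg_le_self hB0), abs_le]
      constructor <;> nlinarith [habs.1, habs.2]
  -- integral error bound
  have hbound : ∀ (ν : Measure E), IsProbabilityMeasure ν → Integrable ψ ν →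
      |(∫ x, f x ∂ν) - ∫ x, fb x ∂ν| ≤ C' * ((∫ x, ψ x ∂ν) - ∫ x, gb x ∂ν) := by
    intro ν hν hψν
    have hfi := hfint ν hν hψν
    have hfbi : Integrable (fun x => fb x) ν := fb.integrable ν
    have hgbi : Integrable (fun x => gb x) ν := gb.integrable ν
    have hgbx : ∀ x, gb x = min (ψ x) M := fun x => rfl
    rw [← integral_sub hfi hfbi]
    have h1 : ‖∫ x, (f x - fb x) ∂ν‖ ≤ ∫ x, C' * (ψ x - min (ψ x) M) ∂ν := by
      refine norm_integral_le_of_norm_le ?_ (ae_of_all _ fun x => ?_)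
      · exact ((hψν.sub (by simpa [hgbx] using hgbi)).const_mul C')
      · rw [Real.norm_eq_abs]; exact hpt x
    rw [Real.norm_eq_abs] at h1
    calc |∫ x, (f x - fb x) ∂ν| ≤ ∫ x, C' * (ψ x - min (ψ x) M) ∂ν := h1
      _ = C' * ((∫ x, ψ x ∂ν) - ∫ x, gb x ∂ν) := by
          simp only [hgbx]
          rw [integral_const_mul, integral_sub hψν (by simpa [hgbx] using hgbi)]
  -- weak convergence of truncations
  have hconv1 : Tendsto (fun n => ∫ x, fb x ∂(μ n : Measure E)) atTop
      (𝓝 (∫ x, fb x ∂(μ₀ : Measure E))) :=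
    ProbabilityMeasure.tendsto_iff_forall_integral_tendsto.mp hweak fb
  have hconv2 : Tendsto (fun n => ∫ x, gb x ∂(μ n : Measure E)) atTop
      (𝓝 (∫ x, gb x ∂(μ₀ : Measure E))) :=
    ProbabilityMeasure.tendsto_iff_forall_integral_tendsto.mp hweak gb
  have hconv3 : Tendsto
      (fun n => (∫ x, ψ x ∂(μ n : Measure E)) - ∫ x, gb x ∂(μ n : Measure E)) atTop
      (𝓝 ((∫ x, ψ x ∂(μ₀ : Measure E)) - ∫ x, gb x ∂(μ₀ : Measure E))) := hmom.sub hconv2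
  have hgb0 : (∫ x, ψ x ∂(μ₀ : Measure E)) - ∫ x, gb x ∂(μ₀ : Measure E) < δ := by
    have : (∫ x, gb x ∂(μ₀ : Measure E)) = ∫ x, min (ψ x) M ∂(μ₀ : Measure E) := rfl
    rw [this]; exact hM0
  have hev1 : ∀ᶠ n in atTop,
      (∫ x, ψ x ∂(μ n : Measure E)) - ∫ x, gb x ∂(μ n : Measure E) < δ :=
    hconv3.eventually (gt_mem_nhds hgb0)
  obtain ⟨N1, hN1⟩ := eventually_atTop.mp hev1
  obtain ⟨N2, hN2⟩ := Metric.tendsto_atTop.mp hconv1 δ hδ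
  refine ⟨max N1 N2, fun n hn => ?_⟩
  have hb1 := hbound (μ n : Measure E) inferInstance (hint n)
  have hb0 := hbound (μ₀ : Measure E) inferInstance hint0
  have he1 := hN1 n (le_of_max_le_left hn)
  have he2 := hN2 n (le_of_max_le_right hn)
  rw [Real.dist_eq] at he2 ⊢
  have hCδ : C' * δ ≤ ε / 4 := by
    have h1 : C' * δ = C' * ε / (4 * (C' + 1)) := by rw [hδdef]; ring
    rw [h1, div_le_div_iff₀ (by positivity : (0:ℝ) < 4 * (C' + 1)) (by norm_num : (0:ℝ) < 4)]
    nlinarith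
  have h4 : δ ≤ ε / 4 := by
    rw [hδdef, div_le_div_iff₀ (by positivity : (0:ℝ) < 4 * (C' + 1)) (by norm_num : (0:ℝ) < 4)]
    nlinarith [mul_nonneg hε.le hC'0]
  have t1 : |(∫ x, f x ∂(μ n : Measure E)) - ∫ x, fb x ∂(μ n : Measure E)| ≤ ε / 4 :=
    hb1.trans ((mul_le_mul_of_nonneg_left he1.le hC'0).trans hCδ)
  have t0 : |(∫ x, f x ∂(μ₀ : Measure E)) - ∫ x, fb x ∂(μ₀ : Measure E)| ≤ ε / 4 :=
    hb0.trans ((mul_le_mul_of_nonneg_left hgb0.le hC'0).trans hCδ)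
  have habs1 := abs_sub_abs_le_abs_sub ((∫ x, f x ∂(μ n : Measure E)))
    ((∫ x, f x ∂(μ₀ : Measure E)))
  calc |(∫ x, f x ∂(μ n : Measure E)) - ∫ x, f x ∂(μ₀ : Measure E)|
      ≤ |(∫ x, f x ∂(μ n : Measure E)) - ∫ x, fb x ∂(μ n : Measure E)|
        + |(∫ x, fb x ∂(μ n : Measure E)) - ∫ x, fb x ∂(μ₀ : Measure E)|
        + |(∫ x, fb x ∂(μ₀ : Measure E)) - ∫ x, f x ∂(μ₀ : Measure E)| := by
          have := abs_sub_le ((∫ x, f x ∂(μ n : Measure E)))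
            ((∫ x, fb x ∂(μ n : Measure E))) ((∫ x, f x ∂(μ₀ : Measure E)))
          have := abs_sub_le ((∫ x, fb x ∂(μ n : Measure E)))
            ((∫ x, fb x ∂(μ₀ : Measure E))) ((∫ x, f x ∂(μ₀ : Measure E)))
          linarith
    _ < ε := by
        rw [abs_sub_comm (∫ x, fb x ∂(μ₀ : Measure E))] at *
        linarith
end

section
/- Let E be a Polish space and ψ a gauge function. Let M be a set of Borel probability measures on E each integrating ψ. If every sequence in M converging weakly to a limit in M is uniformly ψ-integrating (as a set), then every weakly compact subset of M is uniformly ψ-integrating. -/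
open MeasureTheory Filter Topology

def UniformlyPsiIntegrating {E : Type*} [MeasurableSpace E] [TopologicalSpace E]
    (ψ : E → ℝ) (M : Set (ProbabilityMeasure E)) : Prop :=
  ∀ ε > (0 : ℝ), ∃ a > (0 : ℝ), ∀ μ ∈ M,
    ∫ x in {x | a ≤ ψ x}, ψ x ∂(μ : Measure E) ≤ ε

theorem stmt2 {E : Type*} [MeasurableSpace E] [TopologicalSpace E] [PolishSpace E]
    [BorelSpace E]
    (ψ : E → ℝ) (hψc : Continuous ψ) (hψ0 : ∀ x, 0 ≤ ψ x)
    (M : Set (ProbabilityMeasure E))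
    (hMint : ∀ μ ∈ M, Integrable ψ (μ : Measure E))
    (hseq : ∀ (μ : ℕ → ProbabilityMeasure E) (μ₀ : ProbabilityMeasure E),
      (∀ n, μ n ∈ M) → μ₀ ∈ M → Tendsto μ atTop (𝓝 μ₀) →
        UniformlyPsiIntegrating ψ (Set.range μ ∪ {μ₀})) :
    ∀ K ⊆ M, IsCompact K → UniformlyPsiIntegrating ψ K := by
  letI := TopologicalSpace.upgradeIsCompletelyMetrizable E
  intro K hKM hK
  by_contra hcon
  rw [UniformlyPsiIntegrating] at hcon
  push_neg at hcon
  obtain ⟨ε, hε, hbad⟩ := hcon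
  -- choose μ n ∈ K with ε < ∫_{ψ ≥ n+1} ψ dμ n
  have hchoice : ∀ n : ℕ, ∃ μ ∈ K,
      ε < ∫ x in {x | (n : ℝ) + 1 ≤ ψ x}, ψ x ∂(μ : Measure E) := by
    intro n
    obtain ⟨μ, hμK, h⟩ := hbad ((n : ℝ) + 1) (by positivity)
    exact ⟨μ, hμK, h⟩
  choose μ hμK hμint using hchoice
  -- extract convergent subsequence
  obtain ⟨μ₀, hμ₀K, φ, hφ, hconv⟩ := hK.tendsto_subseq hμK
  -- apply hseq
  obtain ⟨a, ha, haint⟩ := hseq (μ ∘ φ) μ₀ (fun n => hKM (hμK (φ n))) (hKM hμ₀K) hconv ε hε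
  -- pick n with a ≤ φ n + 1
  obtain ⟨n, hn⟩ := exists_nat_ge a
  have hφn : a ≤ (φ n : ℝ) + 1 := le_trans hn (by exact_mod_cast le_trans (StrictMono.le_apply hφ) (by norm_num))
  have hmem : (μ ∘ φ) n ∈ Set.range (μ ∘ φ) ∪ {μ₀} := Or.inl ⟨n, rfl⟩
  have hle := haint _ hmem
  have hsub : {x | ((φ n : ℝ)) + 1 ≤ ψ x} ⊆ {x | a ≤ ψ x} :=
    fun x hx => le_trans hφn hx
  have hInt : IntegrableOn ψ {x | a ≤ ψ x} ((μ (φ n) : Measure E)) :=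
    (hMint _ (hKM (hμK (φ n)))).integrableOn
  have hmono : ∫ x in {x | ((φ n : ℝ)) + 1 ≤ ψ x}, ψ x ∂(μ (φ n) : Measure E)
      ≤ ∫ x in {x | a ≤ ψ x}, ψ x ∂(μ (φ n) : Measure E) := by
    apply setIntegral_mono_set hInt
    · exact Filter.Eventually.of_forall fun x => hψ0 x
    · exact Filter.Eventually.of_forall hsub
  exact absurd (le_trans hmono hle) (not_le.mpr (hμint (φ n)))
end

section
/- Let E be a Polish space and ψ a gauge function. A set M of Borel probability measures on E is relatively compact for the ψ-weak topology if and only if M is uniformly ψ-integrating and relatively compact for the weak topology. -/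
set_option linter.unusedSectionVars false
set_option maxHeartbeats 1000000

open MeasureTheory Filter Topology

/-- The ψ-weak topology on the probability measures integrating ψ: the coarsest
topology making μ ↦ ∫ f dμ continuous for every continuous f with |f| ≤ C(1+ψ). -/
noncomputable def psiWeakTopology {E : Type*} [MeasurableSpace E] [TopologicalSpace E] (ψ : E → ℝ) :
    TopologicalSpace {μ : ProbabilityMeasure E // Integrable ψ (μ : Measure E)} :=
  ⨅ f : {f : E → ℝ // Continuous f ∧ ∃ C : ℝ, ∀ x, |f x| ≤ C * (1 + ψ x)},
    TopologicalSpace.induced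
      (fun μ : {μ : ProbabilityMeasure E // Integrable ψ (μ : Measure E)} =>
        ∫ x, f.1 x ∂(μ.1 : Measure E)) inferInstance


lemma clamp_abs_le {y B : ℝ} (hB : 0 ≤ B) : |max (min y B) (-B)| ≤ B := by
  rw [abs_le]
  exact ⟨le_max_right _ _, max_le ((min_le_right _ _)) (by linarith)⟩

lemma clamp_sub_abs {y B M : ℝ} (hy : |y| ≤ M) (hB : 0 ≤ B) (hBM : B ≤ M) :
    |y - max (min y B) (-B)| ≤ M - B := by
  rcases abs_le.1 hy with ⟨h1, h2⟩
  rcases le_total y B with hb | hb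
  · rcases le_total (-B) y with ha | ha
    · rw [min_eq_left hb, max_eq_left ha, abs_le]
      constructor <;> linarith
    · rw [min_eq_left hb, max_eq_right ha, abs_le]
      constructor <;> linarith
  · rw [min_eq_right hb, max_eq_left (by linarith : -B ≤ B), abs_le]
    constructor <;> linarith


/-- Generic helper: continuity into a space from an induced topology, via filters. -/
lemma continuous_induced_of_tendsto {X Y W : Type*} [tY : TopologicalSpace Y]
    [tW : TopologicalSpace W] (Φ : X → W) (g : X → Y)
    (h : ∀ x₀ : X, Tendsto g (Filter.comap Φ (𝓝 (Φ x₀))) (𝓝 (g x₀))) :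
    Continuous[TopologicalSpace.induced Φ tW, tY] g := by
  letI := TopologicalSpace.induced Φ tW
  rw [continuous_iff_continuousAt]
  intro x₀
  rw [ContinuousAt, nhds_induced]
  exact h x₀

/-- Generic helper: continuity into the space of probability measures. -/
lemma continuous_toProb {E : Type*} [MeasurableSpace E] [TopologicalSpace E]
    [OpensMeasurableSpace E] {X : Type*} (tX : TopologicalSpace X)
    (v : X → ProbabilityMeasure E)
    (h : ∀ g : BoundedContinuousFunction E ℝ,
      Continuous[tX, _] (fun μ : X => ∫ x, g x ∂(v μ : Measure E))) :
    Continuous[tX, _] v := by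
  letI := tX
  rw [continuous_iff_continuousAt]
  intro x₀
  exact ProbabilityMeasure.tendsto_iff_forall_integral_tendsto.mpr fun g => (h g).continuousAt


section Aux

variable {E : Type*} [MeasurableSpace E] [TopologicalSpace E] [OpensMeasurableSpace E]

/-- Truncation `min ψ a` as a bounded continuous function. -/
noncomputable def psiTrunc (ψ : E → ℝ) (hψc : Continuous ψ) (hψ0 : ∀ x, 0 ≤ ψ x) (a : ℝ) :
    BoundedContinuousFunction E ℝ :=
  BoundedContinuousFunction.ofNormedAddCommGroup (fun x => min (ψ x) a)
    (hψc.min continuous_const) |a| (fun x => by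
      rcases le_or_gt 0 a with ha | ha
      · rw [Real.norm_eq_abs, abs_of_nonneg (le_min (hψ0 x) ha)]
        exact (min_le_right _ _).trans (le_abs_self a)
      · show ‖min (ψ x) a‖ ≤ |a|
        rw [min_eq_right (le_of_lt (lt_of_lt_of_le ha (hψ0 x))), Real.norm_eq_abs])

@[simp] lemma psiTrunc_apply (ψ : E → ℝ) (hψc : Continuous ψ) (hψ0 : ∀ x, 0 ≤ ψ x) (a : ℝ)
    (x : E) : psiTrunc ψ hψc hψ0 a x = min (ψ x) a := rfl

variable {ψ : E → ℝ} (hψc : Continuous ψ) (hψ0 : ∀ x, 0 ≤ ψ x)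

include hψc hψ0

lemma trunc_integrable (μ : Measure E) [IsFiniteMeasure μ] (a : ℝ) :
    Integrable (fun x => min (ψ x) a) μ :=
  (psiTrunc ψ hψc hψ0 a).integrable μ

lemma growth_integrable {f : E → ℝ} (hf : Continuous f) {C : ℝ}
    (hC : ∀ x, |f x| ≤ C * (1 + ψ x)) (μ : Measure E) [IsFiniteMeasure μ]
    (hψi : Integrable ψ μ) : Integrable f μ := by
  have hg : Integrable (fun x => C * (1 + ψ x)) μ :=
    ((integrable_const (1 : ℝ)).add hψi).const_mul C
  exact hg.mono hf.aestronglyMeasurable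
    (Filter.Eventually.of_forall fun x => by
      rw [Real.norm_eq_abs, Real.norm_eq_abs]
      exact (hC x).trans (le_abs_self _))

/-- Monotone truncation convergence of integrals. -/
lemma trunc_tendsto (μ : Measure E) [IsFiniteMeasure μ] (hψi : Integrable ψ μ) :
    Tendsto (fun n : ℕ => ∫ x, min (ψ x) n ∂μ) atTop (𝓝 (∫ x, ψ x ∂μ)) := by
  refine integral_tendsto_of_tendsto_of_monotone
    (fun n => trunc_integrable hψc hψ0 μ n) hψi ?_ ?_
  · exact Filter.Eventually.of_forall fun x m n hmn =>
      min_le_min le_rfl (Nat.cast_le.mpr hmn)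
  · refine Filter.Eventually.of_forall fun x => ?_
    refine Tendsto.congr' ?_ tendsto_const_nhds
    filter_upwards [eventually_ge_atTop ⌈ψ x⌉₊] with n hn
    exact (min_eq_left ((Nat.le_ceil _).trans (Nat.cast_le.mpr hn))).symm


include hψc hψ0 in
lemma core_tendsto {f : E → ℝ} (hf : Continuous f) {C : ℝ} (hC0 : 0 ≤ C)
    (hC : ∀ x, |f x| ≤ C * (1 + ψ x)) {ι : Type*} {L : Filter ι}
    {μs : ι → ProbabilityMeasure E} {ν : ProbabilityMeasure E}
    (hμi : ∀ i, Integrable ψ (μs i : Measure E)) (hνi : Integrable ψ (ν : Measure E))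
    (hval : Tendsto μs L (𝓝 ν))
    (hint : Tendsto (fun i => ∫ x, ψ x ∂(μs i : Measure E)) L
      (𝓝 (∫ x, ψ x ∂(ν : Measure E)))) :
    Tendsto (fun i => ∫ x, f x ∂(μs i : Measure E)) L
      (𝓝 (∫ x, f x ∂(ν : Measure E))) := by
  rw [Metric.tendsto_nhds]
  intro ε hε
  set δ := ε / (2 * C + 2) with hδdef
  have hδ : 0 < δ := div_pos hε (by linarith)
  have hδε : (2 * C + 1) * δ < ε := by
    have h2 : (2 * C + 2) * δ = ε := by
      rw [hδdef]; field_simp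
    nlinarith
  -- choose truncation level n
  have h1 : Tendsto (fun n : ℕ => ∫ x, ψ x ∂(ν : Measure E) - ∫ x, min (ψ x) n ∂(ν : Measure E))
      atTop (𝓝 0) := by
    have := (tendsto_const_nhds (x := ∫ x, ψ x ∂(ν : Measure E)) (f := atTop (α := ℕ))).sub
      (trunc_tendsto hψc hψ0 (ν : Measure E) hνi)
    simpa using this
  obtain ⟨n, hn⟩ := (h1.eventually_lt_const hδ).exists
  -- the clamped function h
  set B : E → ℝ := fun x => C * (1 + min (ψ x) n) with hBdef
  set h : E → ℝ := fun x => max (min (f x) (B x)) (-B x) with hhdef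
  have hBnonneg : ∀ x, 0 ≤ B x := fun x =>
    mul_nonneg hC0 (by have := le_min (hψ0 x) (Nat.cast_nonneg n); linarith)
  have hBle : ∀ x, B x ≤ C * (1 + ψ x) := fun x =>
    mul_le_mul_of_nonneg_left (by have := min_le_left (ψ x) (n : ℝ); linarith) hC0
  have hhc : Continuous h := ((hf.min ((continuous_const.mul
    (continuous_const.add ((hψc.min continuous_const)))))).max
    (((continuous_const.mul (continuous_const.add ((hψc.min continuous_const))))).neg))
  have hhb : ∀ x, ‖h x‖ ≤ C * (1 + n) := fun x => by
    rw [Real.norm_eq_abs]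
    exact (clamp_abs_le (hBnonneg x)).trans (mul_le_mul_of_nonneg_left
      (by have := min_le_right (ψ x) (n : ℝ); linarith) hC0)
  set hB : BoundedContinuousFunction E ℝ :=
    BoundedContinuousFunction.ofNormedAddCommGroup h hhc (C * (1 + n)) hhb with hBcoe
  have hBapp : ∀ x, hB x = h x := fun x => rfl
  -- pointwise bound
  have hkey : ∀ x, |f x - h x| ≤ C * (ψ x - min (ψ x) n) := fun x => by
    have := clamp_sub_abs (hC x) (hBnonneg x) (hBle x)
    calc |f x - h x| ≤ C * (1 + ψ x) - B x := this
      _ = C * (ψ x - min (ψ x) n) := by rw [hBdef]; ring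
  -- integral bound for any probability measure integrating ψ
  have hbound : ∀ (μ : ProbabilityMeasure E), Integrable ψ (μ : Measure E) →
      |∫ x, f x ∂(μ : Measure E) - ∫ x, h x ∂(μ : Measure E)| ≤
        C * (∫ x, ψ x ∂(μ : Measure E) - ∫ x, min (ψ x) n ∂(μ : Measure E)) := by
    intro μ hμψ
    have hfi : Integrable f (μ : Measure E) := growth_integrable hψc hψ0 hf hC (μ : Measure E) hμψ
    have hhi : Integrable h (μ : Measure E) := hB.integrable _
    have hti : Integrable (fun x => min (ψ x) n) (μ : Measure E) :=
      trunc_integrable hψc hψ0 (μ : Measure E) (n : ℝ)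
    rw [← integral_sub hfi hhi]
    calc |∫ x, (f x - h x) ∂(μ : Measure E)| ≤ ∫ x, |f x - h x| ∂(μ : Measure E) := by
          simpa [Real.norm_eq_abs] using
            norm_integral_le_integral_norm (μ := (μ : Measure E)) (fun x => f x - h x)
      _ ≤ ∫ x, C * (ψ x - min (ψ x) n) ∂(μ : Measure E) := by
          refine integral_mono (hfi.sub hhi).abs ((hμψ.sub hti).const_mul C) hkey
      _ = C * (∫ x, ψ x ∂(μ : Measure E) - ∫ x, min (ψ x) n ∂(μ : Measure E)) := by
          rw [integral_const_mul, integral_sub hμψ hti]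
  -- convergence facts
  have htrunc : Tendsto (fun i => ∫ x, min (ψ x) n ∂(μs i : Measure E)) L
      (𝓝 (∫ x, min (ψ x) n ∂(ν : Measure E))) := by
    have := ProbabilityMeasure.tendsto_iff_forall_integral_tendsto.mp hval
      (psiTrunc ψ hψc hψ0 (n : ℝ))
    simpa only [psiTrunc_apply] using this
  have hD : Tendsto (fun i => ∫ x, ψ x ∂(μs i : Measure E) -
      ∫ x, min (ψ x) n ∂(μs i : Measure E)) L
      (𝓝 (∫ x, ψ x ∂(ν : Measure E) - ∫ x, min (ψ x) n ∂(ν : Measure E))) :=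
    hint.sub htrunc
  have hh : Tendsto (fun i => ∫ x, h x ∂(μs i : Measure E)) L
      (𝓝 (∫ x, h x ∂(ν : Measure E))) := by
    have := ProbabilityMeasure.tendsto_iff_forall_integral_tendsto.mp hval hB
    simpa only [hBapp] using this
  filter_upwards [hD.eventually_lt_const hn |>.mono (fun i hi => hi),
    (Metric.tendsto_nhds.1 hh) δ hδ, hD.eventually_lt_const hn] with i hD2 hh2 hD1
  rw [Real.dist_eq] at hh2 ⊢
  have e1 := hbound (μs i) (hμi i)
  have e2 := hbound ν hνi
  have t1 : |∫ x, f x ∂(μs i : Measure E) - ∫ x, f x ∂(ν : Measure E)| ≤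
      |∫ x, f x ∂(μs i : Measure E) - ∫ x, h x ∂(μs i : Measure E)| +
      |∫ x, h x ∂(μs i : Measure E) - ∫ x, h x ∂(ν : Measure E)| +
      |∫ x, h x ∂(ν : Measure E) - ∫ x, f x ∂(ν : Measure E)| := by
    have := abs_sub_le (∫ x, f x ∂(μs i : Measure E)) (∫ x, h x ∂(μs i : Measure E))
      (∫ x, f x ∂(ν : Measure E))
    have := abs_sub_le (∫ x, h x ∂(μs i : Measure E)) (∫ x, h x ∂(ν : Measure E))
      (∫ x, f x ∂(ν : Measure E))
    linarith [abs_sub_le (∫ x, f x ∂(μs i : Measure E)) (∫ x, h x ∂(μs i : Measure E))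
      (∫ x, f x ∂(ν : Measure E)), abs_sub_le (∫ x, h x ∂(μs i : Measure E))
      (∫ x, h x ∂(ν : Measure E)) (∫ x, f x ∂(ν : Measure E))]
  rw [abs_sub_comm] at e2
  have hC1 : C * (∫ x, ψ x ∂((μs i) : Measure E) - ∫ x, min (ψ x) n ∂((μs i) : Measure E)) ≤
      C * δ := mul_le_mul_of_nonneg_left (le_of_lt hD1) hC0
  have hC2 : C * (∫ x, ψ x ∂(ν : Measure E) - ∫ x, min (ψ x) n ∂(ν : Measure E)) ≤ C * δ :=
    mul_le_mul_of_nonneg_left (le_of_lt hn) hC0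
  calc |∫ x, f x ∂(μs i : Measure E) - ∫ x, f x ∂(ν : Measure E)| ≤ _ := t1
    _ < C * δ + δ + C * δ := by
        have := e1.trans hC1
        have := e2.trans hC2
        linarith
    _ ≤ (2 * C + 1) * δ := by ring_nf; linarith
    _ < ε := hδε


/-- The embedding of the set of ψ-integrable probability measures into
`ProbabilityMeasure E × ℝ`. -/
noncomputable def PhiMap (ψ : E → ℝ) :
    {μ : ProbabilityMeasure E // Integrable ψ (μ : Measure E)} → ProbabilityMeasure E × ℝ :=
  fun μ => (μ.1, ∫ x, ψ x ∂(μ.1 : Measure E))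

lemma PhiMap_injective : Function.Injective (PhiMap ψ) := by
  intro μ ν h
  exact Subtype.ext (congrArg Prod.fst h)

include hψc hψ0 in
lemma psiWeak_eq_induced :
    psiWeakTopology ψ = TopologicalSpace.induced (PhiMap ψ) instTopologicalSpaceProd := by
  rw [psiWeakTopology]
  apply le_antisymm
  ·
    -- psiWeakTopology ≤ induced Φ
    have hprod : TopologicalSpace.induced (PhiMap ψ) instTopologicalSpaceProd =
        (TopologicalSpace.induced
          (fun μ : {μ : ProbabilityMeasure E // Integrable ψ (μ : Measure E)} => μ.1)
          inferInstance) ⊓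
        (TopologicalSpace.induced
          (fun μ : {μ : ProbabilityMeasure E // Integrable ψ (μ : Measure E)} =>
            ∫ x, ψ x ∂(μ.1 : Measure E)) inferInstance) := by
      rw [instTopologicalSpaceProd, induced_inf, induced_compose, induced_compose]
      rfl
    rw [hprod]
    refine le_inf ?_ ?_
    · refine continuous_iff_le_induced.mp ?_
      refine continuous_toProb _ _ (fun g => ?_)
      have hb : ∀ x, |g x| ≤ ‖g‖ * (1 + ψ x) := fun x => by
        have h1 : |g x| ≤ ‖g‖ := by
          simpa [Real.norm_eq_abs] using g.norm_coe_le_norm x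
        have h2 : ‖g‖ * 1 ≤ ‖g‖ * (1 + ψ x) :=
          mul_le_mul_of_nonneg_left (by linarith [hψ0 x]) (norm_nonneg g)
        linarith
      exact continuous_iInf_dom (i := ⟨(g : E → ℝ), g.continuous, ‖g‖, hb⟩)
        continuous_induced_dom
    · have hmem : Continuous ψ ∧ ∃ C : ℝ, ∀ x, |ψ x| ≤ C * (1 + ψ x) :=
        ⟨hψc, 1, fun x => by rw [one_mul, abs_of_nonneg (hψ0 x)]; linarith [hψ0 x]⟩
      exact iInf_le _ (⟨ψ, hmem⟩ :
        {f : E → ℝ // Continuous f ∧ ∃ C : ℝ, ∀ x, |f x| ≤ C * (1 + ψ x)})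
  · -- fine direction: induced Φ ≤ psiWeakTopology, i.e. every eval map is Φ-continuous
    refine le_iInf fun f => ?_
    refine continuous_iff_le_induced.mp ?_
    refine continuous_induced_of_tendsto (PhiMap ψ) _ (fun μ₀ => ?_)
    obtain ⟨f, hf, C, hC⟩ := f
    have hΦ : Tendsto (PhiMap ψ) (Filter.comap (PhiMap ψ) (𝓝 (PhiMap ψ μ₀)))
        (𝓝 (PhiMap ψ μ₀)) := tendsto_comap
    have hval : Tendsto (fun μ : {μ : ProbabilityMeasure E // Integrable ψ (μ : Measure E)} =>
        μ.1) (Filter.comap (PhiMap ψ) (𝓝 (PhiMap ψ μ₀))) (𝓝 μ₀.1) :=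
      (continuous_fst.tendsto _).comp hΦ
    have hint : Tendsto (fun μ : {μ : ProbabilityMeasure E // Integrable ψ (μ : Measure E)} =>
        ∫ x, ψ x ∂(μ.1 : Measure E)) (Filter.comap (PhiMap ψ) (𝓝 (PhiMap ψ μ₀)))
        (𝓝 (∫ x, ψ x ∂(μ₀.1 : Measure E))) :=
      (continuous_snd.tendsto _).comp hΦ
    have hC' : ∀ x, |f x| ≤ |C| * (1 + ψ x) := fun x =>
      (hC x).trans (mul_le_mul_of_nonneg_right (le_abs_self C) (by linarith [hψ0 x]))
    exact core_tendsto hψc hψ0 hf (abs_nonneg C) hC' (fun μ => μ.2) μ₀.2 hval hint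


include hψc hψ0

lemma levelSet_measurable (a : ℝ) : MeasurableSet {x | a ≤ ψ x} :=
  (isClosed_le continuous_const hψc).measurableSet

/-- (I3): the truncation error is nonnegative. -/
lemma trunc_err_nonneg (μ : Measure E) [IsFiniteMeasure μ] (hψi : Integrable ψ μ) (c : ℝ) :
    0 ≤ ∫ x, ψ x ∂μ - ∫ x, min (ψ x) c ∂μ := by
  have := integral_mono (trunc_integrable hψc hψ0 μ c) hψi
    (fun x => min_le_left (ψ x) c)
  linarith

/-- (I2'): monotonicity of truncated integrals. -/
lemma trunc_int_mono (μ : Measure E) [IsFiniteMeasure μ] {b c : ℝ} (hbc : b ≤ c) :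
    ∫ x, min (ψ x) b ∂μ ≤ ∫ x, min (ψ x) c ∂μ :=
  integral_mono (trunc_integrable hψc hψ0 μ b) (trunc_integrable hψc hψ0 μ c)
    (fun x => min_le_min le_rfl hbc)

/-- (I1): tail integral bounded by twice the truncation error. -/
lemma tail_le_trunc_err (μ : Measure E) [IsFiniteMeasure μ] (hψi : Integrable ψ μ)
    {c : ℝ} (hc : 0 ≤ c) :
    ∫ x in {x | 2 * c ≤ ψ x}, ψ x ∂μ ≤ 2 * (∫ x, ψ x ∂μ - ∫ x, min (ψ x) c ∂μ) := by
  have hS := levelSet_measurable hψc hψ0 (2 * c)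
  rw [← integral_indicator hS]
  have hmono : ∀ x, Set.indicator {x | 2 * c ≤ ψ x} ψ x ≤ 2 * (ψ x - min (ψ x) c) := by
    intro x
    by_cases hx : x ∈ {x | 2 * c ≤ ψ x}
    · rw [Set.indicator_of_mem hx]
      have h2c : (2 : ℝ) * c ≤ ψ x := hx
      rw [min_eq_right (by linarith : c ≤ ψ x)]
      linarith
    · rw [Set.indicator_of_notMem hx]
      have := min_le_left (ψ x) c
      linarith
  calc ∫ x, Set.indicator {x | 2 * c ≤ ψ x} ψ x ∂μ
      ≤ ∫ x, 2 * (ψ x - min (ψ x) c) ∂μ :=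
        integral_mono (hψi.indicator hS)
          (((hψi.sub (trunc_integrable hψc hψ0 μ c)).const_mul 2)) hmono
    _ = 2 * (∫ x, ψ x ∂μ - ∫ x, min (ψ x) c ∂μ) := by
        rw [integral_const_mul, integral_sub hψi (trunc_integrable hψc hψ0 μ c)]

/-- (I2): the truncation error is bounded by the tail integral. -/
lemma trunc_err_le_tail (μ : Measure E) [IsFiniteMeasure μ] (hψi : Integrable ψ μ)
    {a c : ℝ} (ha : 0 ≤ a) (hac : a ≤ c) :
    ∫ x, ψ x ∂μ - ∫ x, min (ψ x) c ∂μ ≤ ∫ x in {x | a ≤ ψ x}, ψ x ∂μ := by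
  have hS := levelSet_measurable hψc hψ0 a
  rw [← integral_indicator hS]
  have hmono : ∀ x, ψ x - min (ψ x) c ≤ Set.indicator {x | a ≤ ψ x} ψ x := by
    intro x
    rcases le_total (ψ x) c with h | h
    · rw [min_eq_left h, sub_self]
      exact Set.indicator_nonneg (fun y _ => hψ0 y) x
    · rw [min_eq_right h]
      have hx : x ∈ {x | a ≤ ψ x} := le_trans hac h
      rw [Set.indicator_of_mem hx]
      linarith
  have := integral_mono (hψi.sub (trunc_integrable hψc hψ0 μ c)) (hψi.indicator hS) hmono
  simp only [Pi.sub_apply] at this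
  rw [integral_sub hψi (trunc_integrable hψc hψ0 μ c)] at this
  exact this

/-- (I4): bound on the total integral from a tail bound. -/
lemma int_le_of_tail (μ : Measure E) [IsProbabilityMeasure μ] (hψi : Integrable ψ μ)
    {a ε : ℝ} (ha : 0 ≤ a) (h : ∫ x in {x | a ≤ ψ x}, ψ x ∂μ ≤ ε) :
    ∫ x, ψ x ∂μ ≤ a + ε := by
  have hS := levelSet_measurable hψc hψ0 a
  have hpt : ∀ x, ψ x ≤ min (ψ x) a + Set.indicator {x | a ≤ ψ x} ψ x := by
    intro x
    by_cases hx : x ∈ {x | a ≤ ψ x}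
    · rw [Set.indicator_of_mem hx]
      have := min_le_left (ψ x) a
      have h2 : a ≤ ψ x := hx
      rcases le_total (ψ x) a with h' | h'
      · rw [min_eq_left h']; linarith [hψ0 x]
      · rw [min_eq_right h']; linarith
    · rw [Set.indicator_of_notMem hx]
      have : ψ x < a := lt_of_not_ge hx
      rw [min_eq_left (le_of_lt this), add_zero]
  have h1 : ∫ x, ψ x ∂μ ≤ ∫ x, (min (ψ x) a + Set.indicator {x | a ≤ ψ x} ψ x) ∂μ :=
    integral_mono hψi ((trunc_integrable hψc hψ0 μ a).add (hψi.indicator hS)) hpt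
  rw [integral_add (trunc_integrable hψc hψ0 μ a) (hψi.indicator hS),
    integral_indicator hS] at h1
  have h2 : ∫ x, min (ψ x) a ∂μ ≤ a := by
    have : ∫ x, min (ψ x) a ∂μ ≤ ∫ _x, a ∂μ :=
      integral_mono (trunc_integrable hψc hψ0 μ a) (integrable_const a)
        (fun x => min_le_right _ _)
    simpa [measure_univ] using this
  linarith

/-- Monotone convergence: if truncated integrals converge, ψ is integrable with that integral. -/
lemma integrable_of_trunc_tendsto (ν : Measure E) [IsProbabilityMeasure ν] {r : ℝ}
    (h : Tendsto (fun n : ℕ => ∫ x, min (ψ x) n ∂ν) atTop (𝓝 r)) :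
    Integrable ψ ν ∧ ∫ x, ψ x ∂ν = r := by
  have hr0 : 0 ≤ r := ge_of_tendsto h (Filter.Eventually.of_forall fun n =>
    integral_nonneg fun x => le_min (hψ0 x) (Nat.cast_nonneg n))
  have hlin : ∫⁻ x, ENNReal.ofReal (ψ x) ∂ν = ENNReal.ofReal r := by
    have h1 : Tendsto (fun n : ℕ => ∫⁻ x, ENNReal.ofReal (min (ψ x) n) ∂ν) atTop
        (𝓝 (∫⁻ x, ENNReal.ofReal (ψ x) ∂ν)) := by
      refine lintegral_tendsto_of_tendsto_of_monotone
        (fun n => ((hψc.min continuous_const).measurable.ennreal_ofReal).aemeasurable) ?_ ?_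
      · exact Filter.Eventually.of_forall fun x m n hmn =>
          ENNReal.ofReal_le_ofReal (min_le_min le_rfl (Nat.cast_le.mpr hmn))
      · refine Filter.Eventually.of_forall fun x => ?_
        refine Tendsto.congr' ?_ tendsto_const_nhds
        filter_upwards [eventually_ge_atTop ⌈ψ x⌉₊] with n hn
        rw [min_eq_left ((Nat.le_ceil _).trans (Nat.cast_le.mpr hn))]
    have h2 : (fun n : ℕ => ∫⁻ x, ENNReal.ofReal (min (ψ x) n) ∂ν) =
        fun n : ℕ => ENNReal.ofReal (∫ x, min (ψ x) n ∂ν) := by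
      funext n
      rw [ofReal_integral_eq_lintegral_ofReal (trunc_integrable hψc hψ0 ν (n : ℝ))
        (Filter.Eventually.of_forall fun x => le_min (hψ0 x) (Nat.cast_nonneg n))]
    rw [h2] at h1
    exact tendsto_nhds_unique h1 (ENNReal.tendsto_ofReal h)
  have hint : Integrable ψ ν := by
    refine ⟨hψc.aestronglyMeasurable, ?_⟩
    rw [hasFiniteIntegral_iff_norm]
    have : ∀ x, ENNReal.ofReal ‖ψ x‖ = ENNReal.ofReal (ψ x) := fun x => by
      rw [Real.norm_eq_abs, abs_of_nonneg (hψ0 x)]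
    rw [lintegral_congr this, hlin]
    exact ENNReal.ofReal_lt_top
  refine ⟨hint, ?_⟩
  rw [integral_eq_lintegral_of_nonneg_ae (Filter.Eventually.of_forall hψ0)
    hψc.aestronglyMeasurable, hlin, ENNReal.toReal_ofReal hr0]


omit hψc hψ0 in
/-- Continuity of evaluation maps for the ψ-weak topology. -/
lemma psiWeak_continuous_eval {f : E → ℝ} (hf : Continuous f) {C : ℝ}
    (hC : ∀ x, |f x| ≤ C * (1 + ψ x)) :
    Continuous[psiWeakTopology ψ, _]
      (fun μ : {μ : ProbabilityMeasure E // Integrable ψ (μ : Measure E)} =>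
        ∫ x, f x ∂(μ.1 : Measure E)) := by
  unfold psiWeakTopology
  exact continuous_iInf_dom (i := ⟨f, hf, C, hC⟩) continuous_induced_dom

end Aux
theorem stmt5 {E : Type*} [MeasurableSpace E] [TopologicalSpace E] [PolishSpace E]
    [BorelSpace E]
    (ψ : E → ℝ) (hψc : Continuous ψ) (hψ0 : ∀ x, 0 ≤ ψ x)
    (M : Set {μ : ProbabilityMeasure E // Integrable ψ (μ : Measure E)}) :
    @IsCompact _ (psiWeakTopology ψ) (@closure _ (psiWeakTopology ψ) M) ↔
      (UniformlyPsiIntegrating ψ (Subtype.val '' M) ∧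
        IsCompact (closure (Subtype.val '' M))) := by
  letI T : TopologicalSpace {μ : ProbabilityMeasure E // Integrable ψ (μ : Measure E)} :=
    psiWeakTopology ψ
  have hEq : T = TopologicalSpace.induced (PhiMap ψ) instTopologicalSpaceProd :=
    psiWeak_eq_induced hψc hψ0
  have hInd : IsInducing (PhiMap ψ) := ⟨hEq⟩
  have hψcont : Continuous[psiWeakTopology ψ, _]
      (fun μ : {μ : ProbabilityMeasure E // Integrable ψ (μ : Measure E)} =>
        ∫ x, ψ x ∂(μ.1 : Measure E)) :=
    psiWeak_continuous_eval hψc (C := 1)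
      (fun x => by rw [one_mul, abs_of_nonneg (hψ0 x)]; linarith [hψ0 x])
  have htrcont : ∀ n : ℕ, Continuous[psiWeakTopology ψ, _]
      (fun μ : {μ : ProbabilityMeasure E // Integrable ψ (μ : Measure E)} =>
        ∫ x, min (ψ x) n ∂(μ.1 : Measure E)) := by
    intro n
    refine psiWeak_continuous_eval (hψc.min continuous_const) (C := 1) (fun x => ?_)
    rw [one_mul, abs_of_nonneg (le_min (hψ0 x) (Nat.cast_nonneg n))]
    have := min_le_left (ψ x) (n : ℝ)
    linarith [hψ0 x]
  show IsCompact (closure M) ↔ _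
  constructor
  · intro hcomp
    have hvalcont : Continuous
        (fun μ : {μ : ProbabilityMeasure E // Integrable ψ (μ : Measure E)} => μ.1) :=
      continuous_fst.comp hInd.continuous
    constructor
    · -- uniformly ψ-integrating
      intro ε hε
      have hc0 : 0 < ε / 2 := by positivity
      set U : ℕ → Set {μ : ProbabilityMeasure E // Integrable ψ (μ : Measure E)} :=
        fun n => {μ | ∫ x, ψ x ∂(μ.1 : Measure E) - ∫ x, min (ψ x) n ∂(μ.1 : Measure E) < ε / 2}
        with hU
      have hUopen : ∀ n, IsOpen (U n) := fun n =>
        isOpen_lt (hψcont.sub (htrcont n)) continuous_const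
      have hcover : closure M ⊆ ⋃ n, U n := by
        intro μ _
        have h0 : Tendsto (fun n : ℕ => ∫ x, ψ x ∂(μ.1 : Measure E) -
            ∫ x, min (ψ x) n ∂(μ.1 : Measure E)) atTop (𝓝 0) := by
          have := trunc_tendsto hψc hψ0 (μ.1 : Measure E) μ.2
          simpa using (tendsto_const_nhds (x := ∫ x, ψ x ∂(μ.1 : Measure E))).sub this
        obtain ⟨n, hn⟩ := (h0.eventually_lt_const hc0).exists
        exact Set.mem_iUnion.2 ⟨n, hn⟩
      obtain ⟨t, ht⟩ := hcomp.elim_finite_subcover U hUopen hcover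
      set N : ℕ := t.sup id + 1 with hN
      refine ⟨2 * (N : ℝ), by positivity, ?_⟩
      rintro _ ⟨μ, hμM, rfl⟩
      obtain ⟨i, hit, hiU⟩ := Set.mem_iUnion₂.1 (ht (subset_closure hμM))
      have hmem : μ ∈ U N := by
        have hle : (i : ℝ) ≤ (N : ℝ) :=
          Nat.cast_le.2 (le_trans (Finset.le_sup (f := id) hit) (Nat.le_succ _))
        have hmono := trunc_int_mono hψc hψ0 (μ.1 : Measure E) hle
        simp only [hU, Set.mem_setOf_eq] at hiU ⊢
        linarith
      simp only [hU, Set.mem_setOf_eq] at hmem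
      have htail := tail_le_trunc_err hψc hψ0 (μ.1 : Measure E) μ.2
        (c := (N : ℝ)) (Nat.cast_nonneg N)
      linarith
    · -- weak relative compactness
      have himg : IsCompact (Subtype.val '' closure M) := hcomp.image hvalcont
      exact himg.of_isClosed_subset isClosed_closure
        (closure_minimal (Set.image_mono subset_closure) himg.isClosed)
  · rintro ⟨hUI, hWC⟩
    have hGcont : ∀ n : ℕ, Continuous (fun q : ProbabilityMeasure E × ℝ =>
        q.2 - ∫ x, min (ψ x) n ∂(q.1 : Measure E)) := by
      intro n
      have hbc := ProbabilityMeasure.continuous_integral_boundedContinuousFunction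
        (X := E) (psiTrunc ψ hψc hψ0 n)
      simp only [psiTrunc_apply] at hbc
      exact continuous_snd.sub (hbc.comp continuous_fst)
    obtain ⟨a₁, ha₁, hUI1⟩ := hUI 1 one_pos
    have hsub : PhiMap ψ '' M ⊆ (closure (Subtype.val '' M)) ×ˢ Set.Icc 0 (a₁ + 1) := by
      rintro _ ⟨μ, hμ, rfl⟩
      refine ⟨subset_closure ⟨μ, hμ, rfl⟩, integral_nonneg hψ0, ?_⟩
      exact int_le_of_tail hψc hψ0 (μ.1 : Measure E) μ.2 (le_of_lt ha₁)
        (hUI1 μ.1 ⟨μ, hμ, rfl⟩)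
    have hKcpt : IsCompact (closure (PhiMap ψ '' M)) :=
      (hWC.prod isCompact_Icc).of_isClosed_subset isClosed_closure
        (closure_minimal hsub (isClosed_closure.prod isClosed_Icc))
    have hrange : closure (PhiMap ψ '' M) ⊆ Set.range (PhiMap ψ) := by
      rintro ⟨ν, r⟩ hp
      have hlower : ∀ n : ℕ, 0 ≤ r - ∫ x, min (ψ x) n ∂(ν : Measure E) := by
        intro n
        have hcl : IsClosed {q : ProbabilityMeasure E × ℝ |
            0 ≤ q.2 - ∫ x, min (ψ x) n ∂(q.1 : Measure E)} :=
          isClosed_le continuous_const (hGcont n)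
        refine closure_minimal ?_ hcl hp
        rintro _ ⟨μ, hμ, rfl⟩
        exact trunc_err_nonneg hψc hψ0 (μ.1 : Measure E) μ.2 n
      have hupper : ∀ ε > (0 : ℝ), ∃ N : ℕ, ∀ n ≥ N,
          r - ∫ x, min (ψ x) n ∂(ν : Measure E) ≤ ε := by
        intro ε hε
        obtain ⟨a, ha, hUIa⟩ := hUI ε hε
        refine ⟨⌈a⌉₊, fun n hn => ?_⟩
        have han : a ≤ (n : ℝ) := (Nat.le_ceil a).trans (Nat.cast_le.2 hn)
        have hcl : IsClosed {q : ProbabilityMeasure E × ℝ |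
            q.2 - ∫ x, min (ψ x) n ∂(q.1 : Measure E) ≤ ε} :=
          isClosed_le (hGcont n) continuous_const
        refine closure_minimal ?_ hcl hp
        rintro _ ⟨μ, hμ, rfl⟩
        exact (trunc_err_le_tail hψc hψ0 (μ.1 : Measure E) μ.2 (le_of_lt ha) han).trans
          (hUIa μ.1 ⟨μ, hμ, rfl⟩)
      have htend : Tendsto (fun n : ℕ => ∫ x, min (ψ x) n ∂(ν : Measure E)) atTop (𝓝 r) := by
        rw [Metric.tendsto_atTop]
        intro ε hε
        obtain ⟨N, hN⟩ := hupper (ε / 2) (by positivity)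
        refine ⟨N, fun n hn => ?_⟩
        have h1 := hlower n
        have h2 := hN n hn
        rw [Real.dist_eq, abs_sub_comm, abs_of_nonneg h1]
        linarith
      obtain ⟨hi, hival⟩ := integrable_of_trunc_tendsto hψc hψ0 (ν : Measure E) htend
      exact ⟨⟨ν, hi⟩, by simp only [PhiMap, hival]⟩
    have hpre : IsCompact (PhiMap ψ ⁻¹' closure (PhiMap ψ '' M)) := by
      rw [hInd.isCompact_iff]
      rw [Set.image_preimage_eq_inter_range, Set.inter_eq_left.2 hrange]
      exact hKcpt
    refine hpre.of_isClosed_subset isClosed_closure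
      (closure_minimal (fun μ hμ => subset_closure ⟨μ, hμ, rfl⟩)
        (IsClosed.preimage hInd.continuous isClosed_closure))
end

section
/- Let E be a Polish space and (ψ_k) a sequence of gauge functions. If M is a subset of the set of probability measures integrating every ψ_k, and M is relatively compact for the (ψ_k)-weak topology, then on M the relative weak topology coincides with the relative (ψ_k)-weak topology; equivalently, every sequence in M converging weakly to an element of M converges (ψ_k)-weakly to it. -/
open MeasureTheory Filter Topology BoundedContinuousFunction

/-- The (ψ_k)-weak topology on the probability measures integrating every ψ_k:
the coarsest topology making μ ↦ ∫ f dμ continuous for every continuous f with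
|f| ≤ C(1+ψ_k) for some k and C. -/
noncomputable def psikWeakTopology {E : Type*} [MeasurableSpace E] [TopologicalSpace E]
    (ψ : ℕ → E → ℝ) :
    TopologicalSpace {μ : ProbabilityMeasure E // ∀ k, Integrable (ψ k) (μ : Measure E)} :=
  ⨅ k : ℕ, ⨅ f : {f : E → ℝ // Continuous f ∧ ∃ C : ℝ, ∀ x, |f x| ≤ C * (1 + ψ k x)},
    TopologicalSpace.induced
      (fun μ : {μ : ProbabilityMeasure E // ∀ k, Integrable (ψ k) (μ : Measure E)} =>
        ∫ x, f.1 x ∂(μ.1 : Measure E)) inferInstance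

/-- Each bounded-continuous integral functional is continuous for the ψ-weak topology. -/
lemma psik_integral_continuous {E : Type*} [MeasurableSpace E] [TopologicalSpace E]
    (ψ : ℕ → E → ℝ) (hψ0 : ∀ k x, 0 ≤ ψ k x) (f : E →ᵇ ℝ) :
    @Continuous _ ℝ (psikWeakTopology ψ) _
      (fun ν : {μ : ProbabilityMeasure E // ∀ k, Integrable (ψ k) (μ : Measure E)} =>
        ∫ x, f x ∂(ν.1 : Measure E)) := by
  rw [continuous_iff_le_induced (t₁ := psikWeakTopology ψ)]
  have hb : ∀ x, |f x| ≤ ‖f‖ * (1 + ψ 0 x) := by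
    intro x
    calc |f x| ≤ ‖f‖ := f.norm_coe_le_norm x
      _ = ‖f‖ * 1 := (mul_one _).symm
      _ ≤ ‖f‖ * (1 + ψ 0 x) := by
          apply mul_le_mul_of_nonneg_left _ (norm_nonneg f)
          linarith [hψ0 0 x]
  exact le_trans (iInf_le _ 0) (iInf_le _ (⟨⇑f, f.continuous, ‖f‖, hb⟩ :
    {f : E → ℝ // Continuous f ∧ ∃ C : ℝ, ∀ x, |f x| ≤ C * (1 + ψ 0 x)}))

/-- The ψ-weak topology is finer than the (subspace of the) weak topology. -/
lemma psik_le_weak {E : Type*} [MeasurableSpace E] [TopologicalSpace E]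
    [OpensMeasurableSpace E]
    (ψ : ℕ → E → ℝ) (hψ0 : ∀ k x, 0 ≤ ψ k x) :
    psikWeakTopology ψ ≤
      (inferInstance :
        TopologicalSpace {μ : ProbabilityMeasure E // ∀ k, Integrable (ψ k) (μ : Measure E)}) := by
  have hc : @Continuous _ (ProbabilityMeasure E) (psikWeakTopology ψ) _ Subtype.val := by
    rw [@continuous_iff_continuousAt _ _ (psikWeakTopology ψ) _ Subtype.val]
    intro x
    exact ProbabilityMeasure.tendsto_iff_forall_integral_tendsto.mpr
      (fun f => @Continuous.tendsto _ ℝ (psikWeakTopology ψ) _ _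
        (psik_integral_continuous ψ hψ0 f) x)
  have heq : (inferInstance :
      TopologicalSpace {μ : ProbabilityMeasure E // ∀ k, Integrable (ψ k) (μ : Measure E)}) =
      TopologicalSpace.induced Subtype.val ProbabilityMeasure.instTopologicalSpace := rfl
  rw [heq]
  exact (continuous_iff_le_induced (t₁ := psikWeakTopology ψ)).mp hc

theorem stmt6 {E : Type*} [MeasurableSpace E] [TopologicalSpace E] [PolishSpace E]
    [BorelSpace E]
    (ψ : ℕ → E → ℝ) (hψc : ∀ k, Continuous (ψ k)) (hψ0 : ∀ k x, 0 ≤ ψ k x)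
    (M : Set {μ : ProbabilityMeasure E // ∀ k, Integrable (ψ k) (μ : Measure E)})
    (hrc : @IsCompact _ (psikWeakTopology ψ) (@closure _ (psikWeakTopology ψ) M)) :
    ∀ (μ : ℕ → {μ : ProbabilityMeasure E // ∀ k, Integrable (ψ k) (μ : Measure E)})
      (μ₀ : {μ : ProbabilityMeasure E // ∀ k, Integrable (ψ k) (μ : Measure E)}),
      (∀ n, μ n ∈ M) → μ₀ ∈ M →
      Tendsto (fun n => (μ n).1) atTop (𝓝 μ₀.1) →
      @Tendsto _ _ μ atTop (@nhds _ (psikWeakTopology ψ) μ₀) := by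
  intro μ μ₀ hμM hμ₀M hw
  have hle := psik_le_weak ψ hψ0
  have hmem : ∀ n, μ n ∈ @closure _ (psikWeakTopology ψ) M := fun n =>
    @subset_closure _ (psikWeakTopology ψ) M (μ n) (hμM n)
  have hw' : Tendsto μ atTop (𝓝 μ₀) := tendsto_subtype_rng.mpr hw
  refine @IsCompact.tendsto_nhds_of_unique_mapClusterPt _ (psikWeakTopology ψ) _ ℕ atTop μ₀ μ
    hrc (Eventually.of_forall hmem) ?_
  intro x hx hcl
  have h1 : (@nhds _ (psikWeakTopology ψ) x ⊓ Filter.map μ atTop).NeBot := hcl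
  have h2 : @nhds _ (psikWeakTopology ψ) x ⊓ Filter.map μ atTop ≤ 𝓝 x ⊓ Filter.map μ atTop :=
    inf_le_inf_right _ (nhds_mono hle)
  have hcl' : (𝓝 x ⊓ Filter.map μ atTop).NeBot := Filter.neBot_of_le (hf := h1) h2
  have h3 : (𝓝 x ⊓ 𝓝 μ₀).NeBot :=
    Filter.neBot_of_le (hf := hcl') (inf_le_inf_left _ hw')
  exact eq_of_nhds_neBot h3
end

section
/- Let Ψ be a finite Young function and ρ: H^Ψ → ℝ a map on the Orlicz heart of an atomless probability space that is monotone (X ≤ Y a.s. implies ρ(X) ≥ ρ(Y)) and convex. Then ρ is continuous with respect to the Luxemburg norm ‖·‖_Ψ. -/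
open MeasureTheory Filter Topology
open scoped ENNReal

noncomputable def luxemburgNorm {Ω : Type*} [MeasurableSpace Ω] (Ψ : ℝ → ℝ)
    (μ : Measure Ω) (X : Ω → ℝ) : ℝ :=
  sInf {l : ℝ | 0 < l ∧ ∫ ω, Ψ (|X ω| / l) ∂μ ≤ 1}

def orliczHeart {Ω : Type*} [MeasurableSpace Ω] (Ψ : ℝ → ℝ) (μ : Measure Ω) :
    Set (Ω → ℝ) :=
  {X | Measurable X ∧ ∀ c > (0 : ℝ), Integrable (fun ω => Ψ (c * |X ω|)) μ}

section Aux

variable {Ω : Type*} [MeasurableSpace Ω] {μ : Measure Ω} {Ψ : ℝ → ℝ}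

lemma psi_nonneg (hΨmono : Monotone Ψ) (hΨ0 : Ψ 0 = 0) {t : ℝ} (ht : 0 ≤ t) : 0 ≤ Ψ t :=
  hΨ0 ▸ hΨmono ht

lemma psi_add_le (hΨconv : ConvexOn ℝ (Set.Ici (0:ℝ)) Ψ) {a b : ℝ} (ha : 0 ≤ a) (hb : 0 ≤ b) :
    Ψ (a + b) ≤ (1/2) * Ψ (2*a) + (1/2) * Ψ (2*b) := by
  have h := hΨconv.2 (Set.mem_Ici.2 (by linarith : (0:ℝ) ≤ 2*a))
    (Set.mem_Ici.2 (by linarith : (0:ℝ) ≤ 2*b)) (by norm_num : (0:ℝ) ≤ 1/2)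
    (by norm_num : (0:ℝ) ≤ 1/2) (by norm_num)
  simp only [smul_eq_mul] at h
  have e : (1/2 : ℝ) * (2*a) + (1/2) * (2*b) = a + b := by ring
  rwa [e] at h

lemma jensen_aux (hΨconv : ConvexOn ℝ (Set.Ici (0:ℝ)) Ψ) (hΨ0 : Ψ 0 = 0)
    (t : Finset ℕ) (w x : ℕ → ℝ) (hw : ∀ k ∈ t, 0 ≤ w k) (hx : ∀ k ∈ t, 0 ≤ x k)
    (hsum : ∑ k ∈ t, w k ≤ 1) :
    Ψ (∑ k ∈ t, w k * x k) ≤ ∑ k ∈ t, w k * Ψ (x k) := by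
  classical
  set m := (t.sup id) + 1 with hm
  have hmt : m ∉ t := by
    intro h
    have := Finset.le_sup (f := id) h
    simp only [id] at this
    omega
  have hne' : ∀ k ∈ t, k ≠ m := fun k hk he => hmt (he ▸ hk)
  have hw't : ∀ k ∈ t, Function.update w m (1 - ∑ k ∈ t, w k) k = w k := fun k hk =>
    Function.update_of_ne (hne' k hk) _ _
  have hx't : ∀ k ∈ t, Function.update x m 0 k = x k := fun k hk =>
    Function.update_of_ne (hne' k hk) _ _
  have h₁ : ∑ k ∈ insert m t, Function.update w m (1 - ∑ k ∈ t, w k) k = 1 := by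
    rw [Finset.sum_insert hmt, Function.update_self]
    rw [show ∑ k ∈ t, Function.update w m (1 - ∑ k ∈ t, w k) k = ∑ k ∈ t, w k from
      Finset.sum_congr rfl hw't]
    ring
  have h₀ : ∀ k ∈ insert m t, 0 ≤ Function.update w m (1 - ∑ k ∈ t, w k) k := by
    intro k hk
    rcases Finset.mem_insert.1 hk with rfl | hk
    · rw [Function.update_self]
      linarith
    · rw [hw't k hk]; exact hw k hk
  have hmem : ∀ k ∈ insert m t, Function.update x m 0 k ∈ Set.Ici (0:ℝ) := by
    intro k hk
    rcases Finset.mem_insert.1 hk with rfl | hk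
    · rw [Function.update_self]
      exact Set.self_mem_Ici
    · rw [hx't k hk]; exact hx k hk
  have h := hΨconv.map_sum_le h₀ h₁ hmem
  rw [Finset.sum_insert hmt, Finset.sum_insert hmt] at h
  simp only [smul_eq_mul, Function.update_self, mul_zero, zero_add, hΨ0] at h
  calc Ψ (∑ k ∈ t, w k * x k)
      = Ψ (∑ k ∈ t, Function.update w m (1 - ∑ k ∈ t, w k) k *
          Function.update x m 0 k) := by
        congr 1
        exact (Finset.sum_congr rfl fun k hk => by rw [hw't k hk, hx't k hk]).symm
    _ ≤ ∑ k ∈ t, Function.update w m (1 - ∑ k ∈ t, w k) k *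
          Ψ (Function.update x m 0 k) := by
        simpa [hΨ0] using h
    _ = ∑ k ∈ t, w k * Ψ (x k) :=
        Finset.sum_congr rfl fun k hk => by rw [hw't k hk, hx't k hk]

lemma integrable_psi_mono (hΨc : Continuous Ψ) (hΨmono : Monotone Ψ) (hΨ0 : Ψ 0 = 0)
    {h f : Ω → ℝ} (hh : Measurable h) (h0 : ∀ᵐ ω ∂μ, 0 ≤ h ω)
    (hle : ∀ᵐ ω ∂μ, Ψ (h ω) ≤ f ω) (hf : Integrable f μ) :
    Integrable (fun ω => Ψ (h ω)) μ := by
  refine hf.mono' (hΨc.measurable.comp hh).aestronglyMeasurable ?_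
  filter_upwards [h0, hle] with ω h1 h2
  rw [Real.norm_eq_abs, abs_of_nonneg (psi_nonneg hΨmono hΨ0 h1)]
  exact h2

lemma heart_int_comb (hΨc : Continuous Ψ) (hΨmono : Monotone Ψ)
    (hΨconv : ConvexOn ℝ (Set.Ici (0:ℝ)) Ψ) (hΨ0 : Ψ 0 = 0)
    {u v : Ω → ℝ}
    (hu : ∀ c > (0:ℝ), Integrable (fun ω => Ψ (c * |u ω|)) μ)
    (hv : ∀ c > (0:ℝ), Integrable (fun ω => Ψ (c * |v ω|)) μ)
    {h : Ω → ℝ} (hh : Measurable h) (h0 : ∀ ω, 0 ≤ h ω)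
    {a b : ℝ} (ha : 0 < a) (hb : 0 < b)
    (hle : ∀ᵐ ω ∂μ, h ω ≤ a * |u ω| + b * |v ω|) :
    ∀ c > (0:ℝ), Integrable (fun ω => Ψ (c * h ω)) μ := by
  intro c hc
  refine integrable_psi_mono hΨc hΨmono hΨ0 (measurable_const.mul hh)
    (Eventually.of_forall fun ω => mul_nonneg hc.le (h0 ω)) ?_
    ((((hu (2*c*a) (by positivity)).const_mul (1/2)).add
      ((hv (2*c*b) (by positivity)).const_mul (1/2))))
  filter_upwards [hle] with ω hω
  have h1 : Ψ (c * h ω) ≤ Ψ (c * a * |u ω| + c * b * |v ω|) := by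
    apply hΨmono
    calc c * h ω ≤ c * (a * |u ω| + b * |v ω|) :=
          mul_le_mul_of_nonneg_left hω hc.le
      _ = c * a * |u ω| + c * b * |v ω| := by ring
  have h2 := psi_add_le hΨconv (by positivity : (0:ℝ) ≤ c * a * |u ω|)
    (by positivity : (0:ℝ) ≤ c * b * |v ω|)
  have e1 : 2 * (c * a * |u ω|) = 2 * c * a * |u ω| := by ring
  have e2 : 2 * (c * b * |v ω|) = 2 * c * b * |v ω| := by ring
  rw [e1, e2] at h2
  exact h1.trans h2

lemma lux_bound [IsProbabilityMeasure μ]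
    (hΨc : Continuous Ψ) (hΨmono : Monotone Ψ) (hΨ0 : Ψ 0 = 0)
    {g : Ω → ℝ}
    (hint : ∀ c > (0:ℝ), Integrable (fun ω => Ψ (c * |g ω|)) μ)
    {l : ℝ} (hl : 0 < l) (hlt : luxemburgNorm Ψ μ g < l) :
    ∫ ω, Ψ (|g ω| / l) ∂μ ≤ 1 := by
  set S := {l : ℝ | 0 < l ∧ ∫ ω, Ψ (|g ω| / l) ∂μ ≤ 1} with hS
  have hbdd : BddBelow S := ⟨0, fun x hx => hx.1.le⟩
  have hintd : ∀ l' : ℝ, 0 < l' → Integrable (fun ω => Ψ (|g ω| / l')) μ := by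
    intro l' hl'
    have := hint l'⁻¹ (by positivity)
    simpa [div_eq_mul_inv, mul_comm] using this
  have hne : S.Nonempty := by
    have htend : Tendsto (fun n : ℕ => ∫ ω, Ψ (|g ω| / ((n:ℝ)+1)) ∂μ) atTop (𝓝 0) := by
      have h0 : (0:ℝ) = ∫ _ω, (0:ℝ) ∂μ := by simp
      rw [h0]
      apply tendsto_integral_of_dominated_convergence (fun ω => Ψ (|g ω|))
      · intro n
        exact (hintd ((n:ℝ)+1) (by positivity)).aestronglyMeasurable
      · simpa using hint 1 one_pos
      · intro n
        apply Eventually.of_forall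
        intro ω
        rw [Real.norm_eq_abs, abs_of_nonneg (psi_nonneg hΨmono hΨ0 (by positivity))]
        apply hΨmono
        rw [div_le_iff₀ (by positivity)]
        nlinarith [abs_nonneg (g ω), Nat.cast_nonneg (α := ℝ) n]
      · apply Eventually.of_forall
        intro ω
        have h1 : Tendsto (fun n : ℕ => |g ω| / ((n:ℝ)+1)) atTop (𝓝 0) := by
          have h2 := tendsto_const_div_atTop_nhds_zero_nat (|g ω|)
          have h3 := h2.comp (tendsto_add_atTop_nat 1)
          refine h3.congr fun n => ?_
          simp only [Function.comp]
          push_cast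
          ring
        have := (hΨc.tendsto 0).comp h1
        rw [hΨ0] at this
        exact this
    obtain ⟨n, hn⟩ := (htend.eventually_lt_const (by norm_num : (0:ℝ) < 1)).exists
    exact ⟨(n:ℝ)+1, by positivity, hn.le⟩
  have hlt' : sInf S < l := hlt
  obtain ⟨l', hl'S, hl'l⟩ := (csInf_lt_iff hbdd hne).1 hlt'
  refine le_trans (integral_mono (hintd l hl) (hintd l' hl'S.1) fun ω => ?_) hl'S.2
  apply hΨmono
  rw [div_le_div_iff₀ hl hl'S.1]
  exact mul_le_mul_of_nonneg_left hl'l.le (abs_nonneg _)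

end Aux
/-- A real-valued monotone convex functional on the Orlicz heart of an atomless
probability space is continuous with respect to the Luxemburg norm. -/
theorem stmt13 {Ω : Type*} [MeasurableSpace Ω] (μ : Measure Ω)
    [IsProbabilityMeasure μ]
    (hatomless : ∀ s : Set Ω, MeasurableSet s → 0 < μ s →
      ∃ t ⊆ s, MeasurableSet t ∧ 0 < μ t ∧ μ t < μ s)
    (Ψ : ℝ → ℝ) (hΨc : Continuous Ψ) (hΨmono : Monotone Ψ)
    (hΨconv : ConvexOn ℝ (Set.Ici (0 : ℝ)) Ψ) (hΨ0 : Ψ 0 = 0)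
    (hΨtop : Tendsto Ψ atTop atTop)
    (ρ : (Ω → ℝ) → ℝ)
    (hmono : ∀ X ∈ orliczHeart Ψ μ, ∀ Y ∈ orliczHeart Ψ μ,
      (∀ᵐ ω ∂μ, X ω ≤ Y ω) → ρ Y ≤ ρ X)
    (hconv : ∀ X ∈ orliczHeart Ψ μ, ∀ Y ∈ orliczHeart Ψ μ, ∀ t : ℝ, 0 ≤ t → t ≤ 1 →
      ρ (fun ω => t * X ω + (1 - t) * Y ω) ≤ t * ρ X + (1 - t) * ρ Y) :
    ∀ X ∈ orliczHeart Ψ μ, ∀ ε > (0 : ℝ), ∃ δ > (0 : ℝ),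
      ∀ Y ∈ orliczHeart Ψ μ,
        luxemburgNorm Ψ μ (fun ω => X ω - Y ω) < δ → |ρ X - ρ Y| < ε := by
  intro X hX ε hε
  by_contra hcon
  push_neg at hcon
  choose Y hYmem hYnorm hYgap using fun k : ℕ => hcon ((1/8 : ℝ)^(k+1)) (by positivity)
  -- basic integrability of the differences
  have habs : ∀ k : ℕ, ∀ c > (0:ℝ),
      Integrable (fun ω => Ψ (c * |X ω - Y k ω|)) μ := by
    intro k
    exact heart_int_comb hΨc hΨmono hΨconv hΨ0 hX.2 (hYmem k).2
      ((hX.1.sub (hYmem k).1).abs) (fun ω => abs_nonneg _) one_pos one_pos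
      (Eventually.of_forall fun ω => by
        rw [one_mul, one_mul]; exact abs_sub _ _)
  -- the key integral bound coming from the small Luxemburg norms
  have hb : ∀ c : ℝ, 0 < c → ∀ k : ℕ, c * ((k:ℝ)+1) ≤ 4^(k+1) →
      ∫ ω, Ψ ((2:ℝ)^(k+1) * c * ((k:ℝ)+1) * |X ω - Y k ω|) ∂μ ≤ 1 := by
    intro c hc k hk
    set A := (2:ℝ)^(k+1) * c * ((k:ℝ)+1) with hA
    have hApos : 0 < A := by positivity
    have hA8 : A ≤ 8^(k+1) := by
      have h1 : A ≤ (2:ℝ)^(k+1) * 4^(k+1) := by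
        rw [hA, mul_assoc]
        exact mul_le_mul_of_nonneg_left hk (by positivity)
      calc A ≤ (2:ℝ)^(k+1) * 4^(k+1) := h1
        _ = 8^(k+1) := by rw [← mul_pow]; norm_num
    have hlt : luxemburgNorm Ψ μ (fun ω => X ω - Y k ω) < A⁻¹ := by
      refine lt_of_lt_of_le (hYnorm k) ?_
      have h8 : ((1:ℝ)/8)^(k+1) = ((8:ℝ)^(k+1))⁻¹ := by
        rw [one_div, inv_pow]
      rw [h8]
      exact inv_anti₀ hApos hA8
    have hres := lux_bound hΨc hΨmono hΨ0 (habs k) (inv_pos.2 hApos) hlt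
    rwa [show (fun ω => Ψ (|X ω - Y k ω| / A⁻¹)) = fun ω => Ψ (A * |X ω - Y k ω|) from
      funext fun ω => by rw [div_eq_mul_inv, inv_inv, mul_comm]] at hres
  -- partial sums
  set SI : ℕ → ℕ → Ω → ℝ :=
    fun A B ω => ∑ k ∈ Finset.Ico A B, ((k:ℝ)+1) * |X ω - Y k ω| with hSI
  have hSImeas : ∀ A B, Measurable (SI A B) := by
    intro A B
    simp only [hSI]
    exact Finset.measurable_sum _ fun k _ =>
      measurable_const.mul (hX.1.sub (hYmem k).1).abs
  have hSnonneg : ∀ A B ω, 0 ≤ SI A B ω := by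
    intro A B ω
    simp only [hSI]
    exact Finset.sum_nonneg fun k _ => by positivity
  -- geometric weights
  have hgeo : ∀ B : ℕ, ∑ k ∈ Finset.range B, ((1/2:ℝ))^(k+1) = 1 - (1/2)^B := by
    intro B
    induction B with
    | zero => simp
    | succ n ih => rw [Finset.sum_range_succ, ih]; ring
  have hwsum : ∀ A B : ℕ, ∑ k ∈ Finset.Ico A B, ((1/2:ℝ))^(k+1) ≤ 1 := by
    intro A B
    have h1 : ∑ k ∈ Finset.Ico A B, ((1/2:ℝ))^(k+1) ≤
        ∑ k ∈ Finset.range B, ((1/2:ℝ))^(k+1) := by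
      rw [Finset.range_eq_Ico]
      exact Finset.sum_le_sum_of_subset_of_nonneg
        (Finset.Ico_subset_Ico (Nat.zero_le A) le_rfl) (fun k _ _ => by positivity)
    rw [hgeo B] at h1
    have : (0:ℝ) ≤ (1/2:ℝ)^B := by positivity
    linarith
  -- pointwise Jensen inequality
  have hjen : ∀ c : ℝ, 0 ≤ c → ∀ (A B : ℕ) (ω : Ω),
      Ψ (c * SI A B ω) ≤
        ∑ k ∈ Finset.Ico A B, (1/2:ℝ)^(k+1) *
          Ψ ((2:ℝ)^(k+1) * c * ((k:ℝ)+1) * |X ω - Y k ω|) := by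
    intro c hc A B ω
    have h := jensen_aux hΨconv hΨ0 (Finset.Ico A B) (fun k => (1/2:ℝ)^(k+1))
      (fun k => (2:ℝ)^(k+1) * c * ((k:ℝ)+1) * |X ω - Y k ω|)
      (fun k _ => by positivity) (fun k _ => by positivity) (hwsum A B)
    have e : c * SI A B ω = ∑ k ∈ Finset.Ico A B,
        (1/2:ℝ)^(k+1) * ((2:ℝ)^(k+1) * c * ((k:ℝ)+1) * |X ω - Y k ω|) := by
      simp only [hSI]
      rw [Finset.mul_sum]
      refine Finset.sum_congr rfl fun k _ => ?_
      have h2 : ((1:ℝ)/2)^(k+1) * (2:ℝ)^(k+1) = 1 := by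
        rw [← mul_pow]; norm_num
      calc c * (((k:ℝ)+1) * |X ω - Y k ω|)
          = (((1:ℝ)/2)^(k+1) * (2:ℝ)^(k+1)) * (c * (((k:ℝ)+1) * |X ω - Y k ω|)) := by
            rw [h2, one_mul]
        _ = (1/2:ℝ)^(k+1) * ((2:ℝ)^(k+1) * c * ((k:ℝ)+1) * |X ω - Y k ω|) := by ring
    rw [e]
    exact h
  -- integrability of the Jensen majorant
  have hSint : ∀ c : ℝ, 0 < c → ∀ A B : ℕ,
      Integrable (fun ω => ∑ k ∈ Finset.Ico A B, (1/2:ℝ)^(k+1) *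
        Ψ ((2:ℝ)^(k+1) * c * ((k:ℝ)+1) * |X ω - Y k ω|)) μ := by
    intro c hc A B
    exact integrable_finset_sum _ fun k _ =>
      (habs k ((2:ℝ)^(k+1) * c * ((k:ℝ)+1)) (by positivity)).const_mul _
  -- integrability of Ψ (c * partial sum)
  have hint2 : ∀ c : ℝ, 0 < c → ∀ A B : ℕ,
      Integrable (fun ω => Ψ (c * SI A B ω)) μ := by
    intro c hc A B
    exact integrable_psi_mono hΨc hΨmono hΨ0 (measurable_const.mul (hSImeas A B))
      (Eventually.of_forall fun ω => mul_nonneg hc.le (hSnonneg A B ω))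
      (Eventually.of_forall fun ω => hjen c hc.le A B ω) (hSint c hc A B)
  -- uniform bound on the integrals of partial sums
  have hps : ∀ c : ℝ, 0 < c → ∀ A B : ℕ, (∀ k, A ≤ k → c * ((k:ℝ)+1) ≤ 4^(k+1)) →
      ∫ ω, Ψ (c * SI A B ω) ∂μ ≤ 1 := by
    intro c hc A B hcond
    calc ∫ ω, Ψ (c * SI A B ω) ∂μ
        ≤ ∫ ω, ∑ k ∈ Finset.Ico A B, (1/2:ℝ)^(k+1) *
            Ψ ((2:ℝ)^(k+1) * c * ((k:ℝ)+1) * |X ω - Y k ω|) ∂μ :=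
          integral_mono (hint2 c hc A B) (hSint c hc A B) fun ω => hjen c hc.le A B ω
      _ = ∑ k ∈ Finset.Ico A B, (1/2:ℝ)^(k+1) *
            ∫ ω, Ψ ((2:ℝ)^(k+1) * c * ((k:ℝ)+1) * |X ω - Y k ω|) ∂μ := by
          rw [integral_finset_sum _ (fun k _ =>
            (habs k ((2:ℝ)^(k+1) * c * ((k:ℝ)+1)) (by positivity)).const_mul _)]
          exact Finset.sum_congr rfl fun k _ => integral_const_mul _ _
      _ ≤ ∑ k ∈ Finset.Ico A B, (1/2:ℝ)^(k+1) * 1 := by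
          refine Finset.sum_le_sum fun k hk => ?_
          exact mul_le_mul_of_nonneg_left
            (hb c hc k (hcond k (Finset.mem_Ico.1 hk).1)) (by positivity)
      _ ≤ 1 := by
          simp only [mul_one]
          exact hwsum A B
  -- the dominating random variable
  set ZE : Ω → ℝ≥0∞ :=
    fun ω => ∑' k : ℕ, ENNReal.ofReal (((k:ℝ)+1) * |X ω - Y k ω|) with hZE
  have hZEmeas : Measurable ZE := by
    simp only [hZE]
    exact Measurable.ennreal_tsum fun k =>
      ENNReal.measurable_ofReal.comp (measurable_const.mul (hX.1.sub (hYmem k).1).abs)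
  have hofS : ∀ A B ω, ENNReal.ofReal (SI A B ω) =
      ∑ k ∈ Finset.Ico A B, ENNReal.ofReal (((k:ℝ)+1) * |X ω - Y k ω|) := by
    intro A B ω
    simp only [hSI]
    exact ENNReal.ofReal_sum_of_nonneg fun k _ => by positivity
  have htendZE : ∀ ω, Tendsto (fun K => ENNReal.ofReal (SI 0 K ω)) atTop (𝓝 (ZE ω)) := by
    intro ω
    have h := ENNReal.tendsto_nat_tsum (fun k => ENNReal.ofReal (((k:ℝ)+1) * |X ω - Y k ω|))
    refine h.congr fun K => ?_
    rw [hofS, Finset.range_eq_Ico]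
  have hmonoS : ∀ ω, Monotone (fun K => SI 0 K ω) := by
    intro ω K₁ K₂ h
    simp only [hSI]
    exact Finset.sum_le_sum_of_subset_of_nonneg
      (Finset.Ico_subset_Ico le_rfl h) (fun k _ _ => by positivity)
  -- the liminf bound
  have hlim : ∀ c : ℝ, 0 < c → ∀ A : ℕ, (∀ k, A ≤ k → c * ((k:ℝ)+1) ≤ 4^(k+1)) →
      ∫⁻ ω, liminf (fun K => ENNReal.ofReal (Ψ (c * SI A K ω))) atTop ∂μ ≤ 1 := by
    intro c hc A hcond
    refine le_trans (lintegral_liminf_le fun K =>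
      ENNReal.measurable_ofReal.comp
        (hΨc.measurable.comp (measurable_const.mul (hSImeas A K)))) ?_
    have hK : ∀ K, ∫⁻ ω, ENNReal.ofReal (Ψ (c * SI A K ω)) ∂μ ≤ 1 := by
      intro K
      rw [← ofReal_integral_eq_lintegral_ofReal (hint2 c hc A K)
        (Eventually.of_forall fun ω =>
          psi_nonneg hΨmono hΨ0 (mul_nonneg hc.le (hSnonneg A K ω)))]
      calc ENNReal.ofReal (∫ ω, Ψ (c * SI A K ω) ∂μ)
          ≤ ENNReal.ofReal 1 := ENNReal.ofReal_le_ofReal (hps c hc A K hcond)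
        _ = 1 := ENNReal.ofReal_one
    calc liminf (fun K => ∫⁻ ω, ENNReal.ofReal (Ψ (c * SI A K ω)) ∂μ) atTop
        ≤ liminf (fun _ : ℕ => (1:ℝ≥0∞)) atTop :=
          liminf_le_liminf (Eventually.of_forall hK)
      _ = 1 := liminf_const _
  -- almost everywhere finiteness
  have hcond1 : ∀ k : ℕ, 0 ≤ k → (1:ℝ) * ((k:ℝ)+1) ≤ 4^(k+1) := by
    intro k _
    rw [one_mul]
    have h1 : (k:ℝ) + 1 ≤ 2^(k+1) := by
      have := (Nat.lt_two_pow_self : k+1 < 2^(k+1))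
      have h2 : ((k+1 : ℕ) : ℝ) ≤ ((2^(k+1) : ℕ) : ℝ) := Nat.cast_le.2 this.le
      push_cast at h2
      linarith
    have h2 : (2:ℝ)^(k+1) ≤ 4^(k+1) :=
      pow_le_pow_left₀ (by norm_num) (by norm_num) _
    linarith
  have hfin : ∀ᵐ ω ∂μ, ZE ω < ⊤ := by
    have h1 := hlim 1 one_pos 0 hcond1
    have h2 : ∀ᵐ ω ∂μ,
        liminf (fun K => ENNReal.ofReal (Ψ (1 * SI 0 K ω))) atTop < ⊤ :=
      ae_lt_top (Measurable.liminf fun K =>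
        ENNReal.measurable_ofReal.comp
          (hΨc.measurable.comp (measurable_const.mul (hSImeas 0 K))))
        (lt_of_le_of_lt h1 ENNReal.one_lt_top).ne
    filter_upwards [h2] with ω hω
    by_contra htop
    push_neg at htop
    have hZtop : ZE ω = ⊤ := top_le_iff.1 htop
    have hSun : Tendsto (fun K => SI 0 K ω) atTop atTop := by
      apply tendsto_atTop_atTop_of_monotone (hmonoS ω)
      intro b
      have h3 := htendZE ω
      rw [hZtop] at h3
      have hev := h3.eventually (lt_mem_nhds (show ENNReal.ofReal b < ⊤ from
        ENNReal.ofReal_lt_top))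
      obtain ⟨K, hK⟩ := hev.exists
      refine ⟨K, ?_⟩
      by_contra hlt
      push_neg at hlt
      exact absurd (ENNReal.ofReal_le_ofReal hlt.le) (not_le.2 hK)
    have hPsiT : Tendsto (fun K => Ψ (1 * SI 0 K ω)) atTop atTop := by
      have h4 := hΨtop.comp hSun
      refine h4.congr fun K => ?_
      simp [one_mul, Function.comp]
    have h5 : Tendsto (fun K => ENNReal.ofReal (Ψ (1 * SI 0 K ω))) atTop (𝓝 ⊤) :=
      ENNReal.tendsto_ofReal_atTop.comp hPsiT
    rw [h5.liminf_eq] at hω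
    exact absurd hω (lt_irrefl ⊤)
  -- the dominating function Z
  set Z : Ω → ℝ := fun ω => (ZE ω).toReal with hZ
  have hZmeas : Measurable Z := ENNReal.measurable_toReal.comp hZEmeas
  have hZnn : ∀ ω, 0 ≤ Z ω := fun ω => ENNReal.toReal_nonneg
  have hStoZ : ∀ᵐ ω ∂μ, Tendsto (fun K => SI 0 K ω) atTop (𝓝 (Z ω)) := by
    filter_upwards [hfin] with ω hω
    have h1 := htendZE ω
    have h2 : Tendsto (fun K => (ENNReal.ofReal (SI 0 K ω)).toReal) atTop
        (𝓝 (ZE ω).toReal) := (ENNReal.tendsto_toReal hω.ne).comp h1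
    exact h2.congr fun K => ENNReal.toReal_ofReal (hSnonneg 0 K ω)
  have hZk : ∀ᵐ ω ∂μ, ∀ k : ℕ, ((k:ℝ)+1) * |X ω - Y k ω| ≤ Z ω := by
    filter_upwards [hfin] with ω hω
    intro k
    have h1 : ENNReal.ofReal (((k:ℝ)+1) * |X ω - Y k ω|) ≤ ZE ω := ENNReal.le_tsum k
    calc ((k:ℝ)+1) * |X ω - Y k ω|
        = (ENNReal.ofReal (((k:ℝ)+1) * |X ω - Y k ω|)).toReal :=
          (ENNReal.toReal_ofReal (by positivity)).symm
      _ ≤ (ZE ω).toReal := ENNReal.toReal_mono hω.ne h1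
  -- heads are below Z
  have hZSIA : ∀ A : ℕ, ∀ᵐ ω ∂μ, SI 0 A ω ≤ Z ω := by
    intro A
    filter_upwards [hStoZ] with ω hω
    exact ge_of_tendsto hω (eventually_atTop.2 ⟨A, fun K hK => hmonoS ω hK⟩)
  -- Z is in the Orlicz heart (integrability part)
  have hZheart : ∀ c > (0:ℝ), Integrable (fun ω => Ψ (c * Z ω)) μ := by
    intro c hc
    obtain ⟨A, hA⟩ : ∃ A : ℕ, ∀ k, A ≤ k → (2*c) * ((k:ℝ)+1) ≤ 4^(k+1) := by
      obtain ⟨n₀, hn₀⟩ := pow_unbounded_of_one_lt (2*c) (by norm_num : (1:ℝ) < 2)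
      refine ⟨n₀, fun k hk => ?_⟩
      have h1 : (2*c) ≤ 2^(k+1) :=
        hn₀.le.trans (pow_le_pow_right₀ (by norm_num) (by omega))
      have h2 : (k:ℝ)+1 ≤ 2^(k+1) := by
        have h3 := (Nat.lt_two_pow_self : k+1 < 2^(k+1))
        have h4 : ((k+1 : ℕ) : ℝ) ≤ ((2^(k+1) : ℕ) : ℝ) := Nat.cast_le.2 h3.le
        push_cast at h4
        linarith
      calc (2*c)*((k:ℝ)+1) ≤ 2^(k+1) * 2^(k+1) :=
            mul_le_mul h1 h2 (by positivity) (by positivity)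
        _ = 4^(k+1) := by rw [← mul_pow]; norm_num
    have hHead : Integrable (fun ω => Ψ ((2*c) * SI 0 A ω)) μ :=
      hint2 (2*c) (by positivity) 0 A
    have hTailBound : ∫⁻ ω, ENNReal.ofReal (Ψ ((2*c) * (Z ω - SI 0 A ω))) ∂μ ≤ 1 := by
      have h1 := hlim (2*c) (by positivity) A hA
      refine le_trans (le_of_eq (lintegral_congr_ae ?_)) h1
      filter_upwards [hStoZ] with ω hω
      have hKA : ∀ K, A ≤ K → SI A K ω = SI 0 K ω - SI 0 A ω := by
        intro K hK
        have h2 := Finset.sum_Ico_consecutive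
          (fun k => ((k:ℝ)+1) * |X ω - Y k ω|) (Nat.zero_le A) hK
        simp only [hSI]
        linarith [h2]
      have htd : Tendsto (fun K => ENNReal.ofReal (Ψ ((2*c) * SI A K ω))) atTop
          (𝓝 (ENNReal.ofReal (Ψ ((2*c) * (Z ω - SI 0 A ω))))) := by
        have h2 : Tendsto (fun K => SI A K ω) atTop (𝓝 (Z ω - SI 0 A ω)) := by
          have h3 := hω.sub_const (SI 0 A ω)
          refine Tendsto.congr' ?_ h3
          filter_upwards [eventually_ge_atTop A] with K hK
          exact (hKA K hK).symm
        exact (ENNReal.continuous_ofReal.tendsto _).comp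
          ((hΨc.tendsto _).comp (h2.const_mul (2*c)))
      exact htd.liminf_eq.symm
    have hTnn : ∀ᵐ ω ∂μ, 0 ≤ Ψ ((2*c) * (Z ω - SI 0 A ω)) := by
      filter_upwards [hZSIA A] with ω hω
      exact psi_nonneg hΨmono hΨ0 (mul_nonneg (by positivity) (by linarith))
    have hTail : Integrable (fun ω => Ψ ((2*c) * (Z ω - SI 0 A ω))) μ := by
      constructor
      · exact (hΨc.measurable.comp
          (measurable_const.mul (hZmeas.sub (hSImeas 0 A)))).aestronglyMeasurable
      · rw [hasFiniteIntegral_iff_ofReal hTnn]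
        exact lt_of_le_of_lt hTailBound ENNReal.one_lt_top
    refine integrable_psi_mono hΨc hΨmono hΨ0 (measurable_const.mul hZmeas)
      (Eventually.of_forall fun ω => mul_nonneg hc.le (hZnn ω)) ?_
      ((hHead.const_mul (1/2)).add (hTail.const_mul (1/2)))
    filter_upwards [hZSIA A] with ω hω
    have e : c * Z ω = c * SI 0 A ω + c * (Z ω - SI 0 A ω) := by ring
    rw [e]
    have h6 := psi_add_le hΨconv (mul_nonneg hc.le (hSnonneg 0 A ω))
      (mul_nonneg hc.le (by linarith : (0:ℝ) ≤ Z ω - SI 0 A ω))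
    rw [show 2 * (c * SI 0 A ω) = (2*c) * SI 0 A ω by ring,
      show 2 * (c * (Z ω - SI 0 A ω)) = (2*c) * (Z ω - SI 0 A ω) by ring] at h6
    exact h6
  have hZabs : ∀ c > (0:ℝ), Integrable (fun ω => Ψ (c * |Z ω|)) μ := by
    intro c hc
    have e : (fun ω => Ψ (c * |Z ω|)) = fun ω => Ψ (c * Z ω) :=
      funext fun ω => by rw [abs_of_nonneg (hZnn ω)]
    rw [e]
    exact hZheart c hc
  -- memberships in the Orlicz heart
  have hXZmem : (fun ω => X ω - Z ω) ∈ orliczHeart Ψ μ := by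
    refine ⟨hX.1.sub hZmeas, ?_⟩
    intro c hc
    exact heart_int_comb hΨc hΨmono hΨconv hΨ0 hX.2 hZabs
      ((hX.1.sub hZmeas).abs) (fun ω => abs_nonneg _) one_pos one_pos
      (Eventually.of_forall fun ω => by rw [one_mul, one_mul]; exact abs_sub _ _) c hc
  have hWmem : ∀ k : ℕ, (fun ω => X ω - 1/((k:ℝ)+1) * Z ω) ∈ orliczHeart Ψ μ := by
    intro k
    have hk1 : (0:ℝ) < (k:ℝ)+1 := by positivity
    refine ⟨hX.1.sub (measurable_const.mul hZmeas), ?_⟩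
    intro c hc
    refine heart_int_comb hΨc hΨmono hΨconv hΨ0 hX.2 hZabs
      ((hX.1.sub (measurable_const.mul hZmeas)).abs) (fun ω => abs_nonneg _)
      one_pos one_pos (Eventually.of_forall fun ω => ?_) c hc
    rw [one_mul, one_mul]
    have h1 : |X ω - 1/((k:ℝ)+1) * Z ω| ≤ |X ω| + |1/((k:ℝ)+1) * Z ω| := abs_sub _ _
    have h2 : |1/((k:ℝ)+1) * Z ω| = 1/((k:ℝ)+1) * Z ω := by
      rw [abs_of_nonneg (mul_nonneg (by positivity) (hZnn ω))]
    have h3 : 1/((k:ℝ)+1) * Z ω ≤ Z ω := by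
      have h4 : 1/((k:ℝ)+1) ≤ 1 := by
        rw [div_le_one hk1]; linarith
      nlinarith [hZnn ω]
    have h5 : |Z ω| = Z ω := abs_of_nonneg (hZnn ω)
    change |X ω - 1/((k:ℝ)+1) * Z ω| ≤ |X ω| + |Z ω|
    linarith
  have h2XYmem : ∀ k : ℕ, (fun ω => 2 * X ω - Y k ω) ∈ orliczHeart Ψ μ := by
    intro k
    refine ⟨(measurable_const.mul hX.1).sub (hYmem k).1, ?_⟩
    intro c hc
    refine heart_int_comb hΨc hΨmono hΨconv hΨ0 hX.2 (hYmem k).2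
      (((measurable_const.mul hX.1).sub (hYmem k).1).abs) (fun ω => abs_nonneg _)
      two_pos one_pos (Eventually.of_forall fun ω => ?_) c hc
    rw [one_mul]
    have h1 : |2 * X ω - Y k ω| ≤ |2 * X ω| + |Y k ω| := abs_sub _ _
    have h2 : |2 * X ω| = 2 * |X ω| := by rw [abs_mul]; norm_num
    change |2 * X ω - Y k ω| ≤ 2 * |X ω| + |Y k ω|
    linarith
  -- convexity estimates
  have hρW : ∀ k : ℕ, ρ (fun ω => X ω - 1/((k:ℝ)+1) * Z ω) ≤
      1/((k:ℝ)+1) * ρ (fun ω => X ω - Z ω) + (1 - 1/((k:ℝ)+1)) * ρ X := by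
    intro k
    have hk1 : (0:ℝ) < (k:ℝ)+1 := by positivity
    have h := hconv _ hXZmem X hX (1/((k:ℝ)+1)) (by positivity)
      (by rw [div_le_one hk1]; linarith)
    have e : (fun ω => X ω - 1/((k:ℝ)+1) * Z ω) =
        (fun ω => 1/((k:ℝ)+1) * (X ω - Z ω) + (1 - 1/((k:ℝ)+1)) * X ω) :=
      funext fun ω => by ring
    rw [e]
    exact h
  have hXmid : ∀ k : ℕ, ρ X ≤ (1/2) * ρ (Y k) + (1 - 1/2) * ρ (fun ω => 2 * X ω - Y k ω) := by
    intro k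
    have h := hconv (Y k) (hYmem k) _ (h2XYmem k) (1/2) (by norm_num) (by norm_num)
    have e : X = (fun ω => (1/2 : ℝ) * Y k ω + (1 - 1/2) * (2 * X ω - Y k ω)) :=
      funext fun ω => by ring
    calc ρ X = ρ (fun ω => (1/2 : ℝ) * Y k ω + (1 - 1/2) * (2 * X ω - Y k ω)) :=
          congrArg ρ e
      _ ≤ _ := h
  -- monotonicity estimates
  have hWle : ∀ k : ℕ, ∀ᵐ ω ∂μ, X ω - 1/((k:ℝ)+1) * Z ω ≤ Y k ω := by
    intro k
    have hk1 : (0:ℝ) < (k:ℝ)+1 := by positivity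
    filter_upwards [hZk] with ω hω
    have h1 := hω k
    have h2 : |X ω - Y k ω| ≤ Z ω / ((k:ℝ)+1) := by
      rw [le_div_iff₀ hk1]; linarith
    have h3 : X ω - Y k ω ≤ |X ω - Y k ω| := le_abs_self _
    have h4 : 1/((k:ℝ)+1) * Z ω = Z ω / ((k:ℝ)+1) := by ring
    linarith
  have hWle2 : ∀ k : ℕ, ∀ᵐ ω ∂μ, X ω - 1/((k:ℝ)+1) * Z ω ≤ 2 * X ω - Y k ω := by
    intro k
    have hk1 : (0:ℝ) < (k:ℝ)+1 := by positivity
    filter_upwards [hZk] with ω hω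
    have h1 := hω k
    have h2 : |X ω - Y k ω| ≤ Z ω / ((k:ℝ)+1) := by
      rw [le_div_iff₀ hk1]; linarith
    have h3 : -(X ω - Y k ω) ≤ |X ω - Y k ω| := neg_le_abs _
    have h4 : 1/((k:ℝ)+1) * Z ω = Z ω / ((k:ℝ)+1) := by ring
    linarith
  -- the contradiction
  have hC : ∀ k : ℕ, ε * ((k:ℝ)+1) ≤ ρ (fun ω => X ω - Z ω) - ρ X := by
    intro k
    have hk1 : (0:ℝ) < (k:ℝ)+1 := by positivity
    have h5 := hρW k
    have hkey : ρ X + ε ≤ ρ (fun ω => X ω - 1/((k:ℝ)+1) * Z ω) := by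
      rcases le_abs.1 (hYgap k) with h | h
      · -- ρ (Y k) ≤ ρ X - ε
        have h7 := hXmid k
        have h8 := hmono _ (hWmem k) _ (h2XYmem k) (hWle2 k)
        linarith
      · -- ρ X + ε ≤ ρ (Y k)
        have h8 := hmono _ (hWmem k) _ (hYmem k) (hWle k)
        linarith
    have h9 : ε ≤ 1/((k:ℝ)+1) * (ρ (fun ω => X ω - Z ω) - ρ X) := by linarith
    have h12 := mul_le_mul_of_nonneg_right h9 hk1.le
    have h13 : 1/((k:ℝ)+1) * (ρ (fun ω => X ω - Z ω) - ρ X) * ((k:ℝ)+1)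
        = ρ (fun ω => X ω - Z ω) - ρ X := by field_simp
    linarith
  obtain ⟨n, hn⟩ := exists_nat_gt ((ρ (fun ω => X ω - Z ω) - ρ X) / ε)
  have h11 := hC n
  rw [div_lt_iff₀ hε] at hn
  nlinarith
end

section
/- Let μ be a Borel probability measure on ℝ, μ ≠ δ_0, such that ∫(a|x| + e^{−ax}) dμ(x) < ∞ for all a > 0. Then the map L_μ(a) = ∫ (log a − a x − e^{−a x}) dμ(x) on (0,∞) is strictly concave and satisfies limsup_{a↓0} L_μ(a) = −∞ and limsup_{a↑∞} L_μ(a) = −∞; consequently L_μ has a unique maximum point. -/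
open MeasureTheory Filter Topology Set

namespace Stmt15Aux

lemma key_ineq (a x : ℝ) : 1 ≤ a * x + Real.exp (-(a * x)) := by
  nlinarith [Real.add_one_le_exp (-(a * x))]

lemma two_mul_le_exp (t : ℝ) : 2 * t ≤ Real.exp t := by
  rcases le_or_gt t 0 with ht | ht
  · nlinarith [Real.exp_pos t]
  · have h1 : Real.exp t = Real.exp (t / 2) * Real.exp (t / 2) := by
      rw [← Real.exp_add]; ring_nf
    nlinarith [Real.add_one_le_exp (t / 2), sq_nonneg (t / 2 - 1)]

variable {μ : Measure ℝ} [IsProbabilityMeasure μ]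

lemma integrable_exp
    (hint : ∀ a > (0 : ℝ), Integrable (fun x => a * |x| + Real.exp (-(a * x))) μ)
    {a : ℝ} (ha : 0 < a) : Integrable (fun x => Real.exp (-(a * x))) μ := by
  refine (hint a ha).mono ?_ ?_
  · exact (Real.continuous_exp.comp (continuous_const.mul continuous_id).neg).aestronglyMeasurable
  · filter_upwards with x
    have h1 : (0 : ℝ) ≤ a * |x| := mul_nonneg ha.le (abs_nonneg x)
    rw [Real.norm_eq_abs, Real.norm_eq_abs, abs_of_pos (Real.exp_pos _),
      abs_of_nonneg (add_nonneg h1 (Real.exp_pos _).le)]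
    linarith

lemma integrable_mul
    (hint : ∀ a > (0 : ℝ), Integrable (fun x => a * |x| + Real.exp (-(a * x))) μ)
    {a : ℝ} (ha : 0 < a) : Integrable (fun x => a * x) μ := by
  refine (hint a ha).mono ?_ ?_
  · exact (continuous_const.mul continuous_id).aestronglyMeasurable
  · filter_upwards with x
    have h1 : (0 : ℝ) ≤ a * |x| := mul_nonneg ha.le (abs_nonneg x)
    rw [Real.norm_eq_abs, Real.norm_eq_abs, abs_mul, abs_of_pos ha,
      abs_of_nonneg (add_nonneg h1 (Real.exp_pos _).le)]
    have := Real.exp_pos (-(a * x))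
    linarith

lemma integrable_G
    (hint : ∀ a > (0 : ℝ), Integrable (fun x => a * |x| + Real.exp (-(a * x))) μ)
    {a : ℝ} (ha : 0 < a) : Integrable (fun x => -(a * x) - Real.exp (-(a * x))) μ :=
  (integrable_mul hint ha).neg.sub (integrable_exp hint ha)

lemma integrable_F
    (hint : ∀ a > (0 : ℝ), Integrable (fun x => a * |x| + Real.exp (-(a * x))) μ)
    {a : ℝ} (ha : 0 < a) :
    Integrable (fun x => Real.log a - a * x - Real.exp (-(a * x))) μ :=
  ((integrable_const _).sub (integrable_mul hint ha)).sub (integrable_exp hint ha)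

lemma L_eq
    (hint : ∀ a > (0 : ℝ), Integrable (fun x => a * |x| + Real.exp (-(a * x))) μ)
    {a : ℝ} (ha : 0 < a) :
    ∫ x, (Real.log a - a * x - Real.exp (-(a * x))) ∂μ
      = Real.log a + ∫ x, (-(a * x) - Real.exp (-(a * x))) ∂μ := by
  have h : (fun x => Real.log a - a * x - Real.exp (-(a * x)))
      = fun x => Real.log a + (-(a * x) - Real.exp (-(a * x))) := by
    funext x; ring
  rw [h, integral_add (integrable_const _) (integrable_G hint ha), integral_const]
  simp

lemma G_concave
    (hint : ∀ a > (0 : ℝ), Integrable (fun x => a * |x| + Real.exp (-(a * x))) μ) :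
    ConcaveOn ℝ (Set.Ioi (0 : ℝ))
      (fun a => ∫ x, (-(a * x) - Real.exp (-(a * x))) ∂μ) := by
  refine ⟨convex_Ioi 0, fun a ha b hb p q hp hq hpq => ?_⟩
  have hc : p • a + q • b ∈ Set.Ioi (0 : ℝ) := convex_Ioi 0 ha hb hp hq hpq
  simp only [smul_eq_mul] at hc ⊢
  have hia := integrable_G hint (Set.mem_Ioi.mp ha)
  have hib := integrable_G hint (Set.mem_Ioi.mp hb)
  have hic := integrable_G hint (Set.mem_Ioi.mp hc)
  have h1 : p * (∫ x, (-(a * x) - Real.exp (-(a * x))) ∂μ)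
        + q * (∫ x, (-(b * x) - Real.exp (-(b * x))) ∂μ)
      = ∫ x, (p * (-(a * x) - Real.exp (-(a * x)))
          + q * (-(b * x) - Real.exp (-(b * x)))) ∂μ := by
    rw [integral_add (hia.const_mul p) (hib.const_mul q), integral_const_mul,
      integral_const_mul]
  rw [h1]
  refine integral_mono ((hia.const_mul p).add (hib.const_mul q)) hic fun x => ?_
  have hexp := convexOn_exp.2 (Set.mem_univ (-(a * x))) (Set.mem_univ (-(b * x))) hp hq hpq
  simp only [smul_eq_mul] at hexp
  have hid : p * -(a * x) + q * -(b * x) = -((p * a + q * b) * x) := by ring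
  rw [hid] at hexp
  simp only
  nlinarith [hexp]

lemma L_le_log_sub_one
    (hint : ∀ a > (0 : ℝ), Integrable (fun x => a * |x| + Real.exp (-(a * x))) μ)
    {a : ℝ} (ha : 0 < a) :
    ∫ x, (Real.log a - a * x - Real.exp (-(a * x))) ∂μ ≤ Real.log a - 1 := by
  have h := integral_mono (integrable_F hint ha)
      (integrable_const (Real.log a - 1)) (fun x => by
        have := key_ineq a x
        simp only
        linarith)
  simpa using h

lemma L_le_atTop
    (hint : ∀ a > (0 : ℝ), Integrable (fun x => a * |x| + Real.exp (-(a * x))) μ)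
    {S : Set ℝ} (hSm : MeasurableSet S) {c : ℝ} (hc : 0 < c)
    (hS : ∀ x ∈ S, c ≤ |x|) {a : ℝ} (ha : 0 < a) :
    ∫ x, (Real.log a - a * x - Real.exp (-(a * x))) ∂μ
      ≤ Real.log a - a * (c * (μ S).toReal) := by
  have hsum : Integrable (fun x => a * x + Real.exp (-(a * x))) μ :=
    (integrable_mul hint ha).add (integrable_exp hint ha)
  have heq : ∫ x, (Real.log a - a * x - Real.exp (-(a * x))) ∂μ
      = Real.log a - ∫ x, (a * x + Real.exp (-(a * x))) ∂μ := by
    have h : (fun x => Real.log a - a * x - Real.exp (-(a * x)))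
        = fun x => Real.log a - (a * x + Real.exp (-(a * x))) := by
      funext x; ring
    rw [h, integral_sub (integrable_const _) hsum, integral_const]
    simp
  have hind : Integrable (S.indicator fun _ => a * c) μ :=
    (integrable_const _).indicator hSm
  have hmono : ∫ x, S.indicator (fun _ => a * c) x ∂μ
      ≤ ∫ x, (a * x + Real.exp (-(a * x))) ∂μ := by
    refine integral_mono hind hsum fun x => ?_
    simp only
    by_cases hx : x ∈ S
    · rw [Set.indicator_of_mem hx]
      have hcx : c ≤ |x| := hS x hx
      rcases le_or_gt 0 x with hx0 | hx0
      · rw [abs_of_nonneg hx0] at hcx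
        have h2 : a * c ≤ a * x := mul_le_mul_of_nonneg_left hcx ha.le
        have := Real.exp_pos (-(a * x))
        linarith
      · rw [abs_of_neg hx0] at hcx
        have h2 : a * c ≤ a * (-x) := mul_le_mul_of_nonneg_left hcx ha.le
        have h3 := two_mul_le_exp (-(a * x))
        linarith
    · rw [Set.indicator_of_notMem hx]
      have := key_ineq a x
      linarith
  rw [integral_indicator_const _ hSm] at hmono
  simp only [smul_eq_mul, measureReal_def] at hmono
  rw [heq]
  nlinarith [hmono]

end Stmt15Aux

open Stmt15Aux

/-- For a probability measure μ ≠ δ₀ on ℝ integrating a|x| + e^{−ax} for every a > 0,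
the Gumbel expected log-likelihood L(a) = ∫ (log a − ax − e^{−ax}) dμ is strictly
concave on (0,∞), tends to −∞ at 0 and at ∞, and has a unique maximum point. -/
theorem stmt15 (μ : Measure ℝ) [IsProbabilityMeasure μ]
    (hne : μ ≠ Measure.dirac 0)
    (hint : ∀ a > (0 : ℝ), Integrable (fun x => a * |x| + Real.exp (-(a * x))) μ) :
    StrictConcaveOn ℝ (Set.Ioi (0 : ℝ))
      (fun a => ∫ x, (Real.log a - a * x - Real.exp (-(a * x))) ∂μ) ∧
    Tendsto (fun a => ∫ x, (Real.log a - a * x - Real.exp (-(a * x))) ∂μ)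
      (𝓝[>] (0 : ℝ)) atBot ∧
    Tendsto (fun a => ∫ x, (Real.log a - a * x - Real.exp (-(a * x))) ∂μ)
      atTop atBot ∧
    ∃! a : ℝ, a ∈ Set.Ioi (0 : ℝ) ∧
      IsMaxOn (fun a => ∫ x, (Real.log a - a * x - Real.exp (-(a * x))) ∂μ)
        (Set.Ioi (0 : ℝ)) a := by
  set L : ℝ → ℝ := fun a => ∫ x, (Real.log a - a * x - Real.exp (-(a * x))) ∂μ with hL
  -- strict concavity
  have hstrict : StrictConcaveOn ℝ (Set.Ioi (0 : ℝ)) L := by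
    have base : StrictConcaveOn ℝ (Set.Ioi (0 : ℝ))
        (fun a => Real.log a + ∫ x, (-(a * x) - Real.exp (-(a * x))) ∂μ) :=
      strictConcaveOn_log_Ioi.add_concaveOn (G_concave hint)
    refine ⟨convex_Ioi 0, fun a ha b hb hab p q hp hq hpq => ?_⟩
    have hc : p • a + q • b ∈ Set.Ioi (0 : ℝ) := convex_Ioi 0 ha hb hp.le hq.le hpq
    have e1 : L (p • a + q • b) = Real.log (p • a + q • b)
        + ∫ x, (-((p • a + q • b) * x) - Real.exp (-((p • a + q • b) * x))) ∂μ :=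
      L_eq hint (Set.mem_Ioi.mp hc)
    have e2 : L a = Real.log a + ∫ x, (-(a * x) - Real.exp (-(a * x))) ∂μ :=
      L_eq hint (Set.mem_Ioi.mp ha)
    have e3 : L b = Real.log b + ∫ x, (-(b * x) - Real.exp (-(b * x))) ∂μ :=
      L_eq hint (Set.mem_Ioi.mp hb)
    rw [e1, e2, e3]
    exact base.2 ha hb hab hp hq hpq
  -- limit at 0⁺
  have htend0 : Tendsto L (𝓝[>] (0 : ℝ)) atBot := by
    refine tendsto_atBot_mono' _ ?_
      ((Real.tendsto_log_nhdsGT_zero.atBot_add tendsto_const_nhds :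
        Tendsto (fun a : ℝ => Real.log a + (-1 : ℝ)) (𝓝[>] 0) atBot))
    filter_upwards [self_mem_nhdsWithin] with a ha
    have := L_le_log_sub_one hint (Set.mem_Ioi.mp ha)
    exact le_of_le_of_eq this (sub_eq_add_neg _ _)
  -- find the set S away from 0 with positive measure
  have h0 : μ ({(0 : ℝ)}ᶜ) ≠ 0 := by
    intro h
    apply hne
    ext s hs
    rw [Measure.dirac_apply' _ hs]
    by_cases h0s : (0 : ℝ) ∈ s
    · rw [Set.indicator_of_mem h0s, Pi.one_apply]
      have hsub : sᶜ ⊆ ({(0 : ℝ)}ᶜ : Set ℝ) := by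
        intro x hx
        simp only [Set.mem_compl_iff, Set.mem_singleton_iff]
        intro hx0
        exact hx (hx0 ▸ h0s)
      have hsc : μ sᶜ = 0 := measure_mono_null hsub h
      have := measure_add_measure_compl (μ := μ) hs
      rw [hsc, add_zero] at this
      simpa using this
    · rw [Set.indicator_of_notMem h0s]
      have hsub : s ⊆ ({(0 : ℝ)}ᶜ : Set ℝ) := by
        intro x hx
        simp only [Set.mem_compl_iff, Set.mem_singleton_iff]
        intro hx0
        exact h0s (hx0 ▸ hx)
      exact measure_mono_null hsub h
  obtain ⟨n, hn⟩ : ∃ n : ℕ, μ {x : ℝ | 1 / (n + 1 : ℝ) ≤ |x|} ≠ 0 := by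
    by_contra hcon
    push_neg at hcon
    apply h0
    refine measure_mono_null (fun x hx => ?_) (measure_iUnion_null hcon)
    have hx0 : (0 : ℝ) < |x| := by
      simp only [Set.mem_compl_iff, Set.mem_singleton_iff] at hx
      exact abs_pos.mpr hx
    obtain ⟨n, hn⟩ := exists_nat_one_div_lt hx0
    exact Set.mem_iUnion.mpr ⟨n, hn.le⟩
  set c : ℝ := 1 / (n + 1 : ℝ) with hcdef
  have hc : 0 < c := by positivity
  set S : Set ℝ := {x : ℝ | c ≤ |x|} with hSdef
  have hSm : MeasurableSet S := (isClosed_le continuous_const continuous_abs).measurableSet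
  set p : ℝ := (μ S).toReal with hpdef
  have hp : 0 < p := ENNReal.toReal_pos hn (measure_ne_top μ S)
  -- limit at ∞
  have htendtop : Tendsto L atTop atBot := by
    have hk : (0 : ℝ) < c * p := mul_pos hc hp
    have h1 : Tendsto (fun a : ℝ => Real.log a / a - c * p) atTop (𝓝 (0 - c * p)) :=
      (Real.isLittleO_log_id_atTop.tendsto_div_nhds_zero).sub_const _
    have h1' : Tendsto (fun a : ℝ => Real.log a / a - c * p) atTop (𝓝 (-(c * p))) := by
      simpa using h1
    have h2 : Tendsto (fun a : ℝ => a * (Real.log a / a - c * p)) atTop atBot :=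
      tendsto_id.atTop_mul_neg (show -(c * p) < 0 by linarith) h1'
    have h3 : Tendsto (fun a : ℝ => Real.log a - a * (c * p)) atTop atBot := by
      refine h2.congr' ?_
      filter_upwards [eventually_gt_atTop (0 : ℝ)] with a ha
      field_simp
    refine tendsto_atBot_mono' _ ?_ h3
    filter_upwards [eventually_gt_atTop (0 : ℝ)] with a ha
    exact L_le_atTop hint hSm hc (fun x hx => hx) ha
  refine ⟨hstrict, htend0, htendtop, ?_⟩
  -- existence and uniqueness of the maximum
  have hconc : ConcaveOn ℝ (Set.Ioi (0 : ℝ)) L := hstrict.concaveOn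
  have hcont : ContinuousOn L (Set.Ioi (0 : ℝ)) := hconc.continuousOn isOpen_Ioi
  obtain ⟨α, hα0, hα⟩ : ∃ α, 0 < α ∧ ∀ a ∈ Set.Ioo (0 : ℝ) α, L a < L 1 := by
    have h := htend0.eventually (eventually_lt_atBot (L 1))
    rw [(nhdsGT_basis (0 : ℝ)).eventually_iff] at h
    obtain ⟨α, hα0, hα⟩ := h
    exact ⟨α, hα0, fun a ha => hα ha⟩
  obtain ⟨β, hβ⟩ : ∃ β : ℝ, ∀ a ≥ β, L a < L 1 :=
    eventually_atTop.mp (htendtop.eventually (eventually_lt_atBot (L 1)))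
  set lo : ℝ := min α 1 / 2 with hlodef
  set hi : ℝ := max β 1 with hhidef
  have hlo0 : 0 < lo := by
    have : 0 < min α 1 := lt_min hα0 one_pos
    positivity
  have hlo1 : lo ≤ 1 := by
    have h1 : min α 1 ≤ 1 := min_le_right _ _
    simp only [hlodef]; linarith
  have h1hi : (1 : ℝ) ≤ hi := le_max_right _ _
  have hKsub : Set.Icc lo hi ⊆ Set.Ioi (0 : ℝ) := fun x hx => lt_of_lt_of_le hlo0 hx.1
  obtain ⟨a₀, ha₀K, ha₀⟩ := isCompact_Icc.exists_isMaxOn ⟨1, hlo1, h1hi⟩ (hcont.mono hKsub)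
  have ha₀pos : a₀ ∈ Set.Ioi (0 : ℝ) := hKsub ha₀K
  have h1le : L 1 ≤ L a₀ := ha₀ ⟨hlo1, h1hi⟩
  have hmax : IsMaxOn L (Set.Ioi (0 : ℝ)) a₀ := by
    rw [isMaxOn_iff]
    intro a ha
    rcases le_or_gt a hi with hahi | hahi
    · rcases le_or_gt lo a with hloa | hloa
      · exact ha₀ ⟨hloa, hahi⟩
      · have haα : a ∈ Set.Ioo (0 : ℝ) α := by
          refine ⟨ha, ?_⟩
          have : lo < α := by
            have h1 : min α 1 ≤ α := min_le_left _ _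
            have h2 : lo < min α 1 := by
              have : 0 < min α 1 := lt_min hα0 one_pos
              simp only [hlodef]; linarith
            linarith
          linarith
        exact le_of_lt (lt_of_lt_of_le (hα a haα) h1le)
    · have : β ≤ a := le_of_lt (lt_of_le_of_lt (le_max_left β 1) hahi)
      exact le_of_lt (lt_of_lt_of_le (hβ a this) h1le)
  exact ⟨a₀, ⟨ha₀pos, hmax⟩, fun b hb =>
    hstrict.eq_of_isMaxOn hb.2 hmax hb.1 ha₀pos⟩
end
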